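/- arXiv:1710.06505 — 4 statements merged into one kernel-verified Lean document; each statement's English description precedes it below -/
import Mathlib

section
/- The cluster mutation map μ_k on (ℂ*)^J preserves the log-canonical Poisson bracket: if {X_i, X_j} = ε_{ij}X_iX_j and X′ = μ_k(X) with mutated exchange matrix ε′ (given by the standard matrix mutation rule ε′_{ij} = −ε_{ij} if i = k or j = k, and ε′_{ij} = ε_{ij} + (|ε_{ik}|ε_{kj} + ε_{ik}|ε_{kj}|)/2 otherwise), then {X′_i, X′_j} = ε′_{ij}X′_iX′_j. -/
/-!
Write `X'_i = clusterMut ε k X i`. Both sides of the identity are bilinear in the logarithmic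
gradients `a ↦ X_a ∂_a X'_i / X'_i`, so it suffices to compute these and pair them with `ε`.
For `i = k` the gradient is `-e_k`; for `i ≠ k` it is `e_i + c_i e_k` with
`c_i = (|ε_ik| + ε_ik t) / 2` and `t = (1 - X_k) / (1 + X_k)`. This uniform expression for `c_i`
comes from `x^(-s) / (1 + x^(-s)) = (1 + s t) / 2`, valid for all three values of `s = sign ε_ik`.
Pairing, the terms in `t` cancel by skew-symmetry and what remains is the matrix mutation rule.
-/

noncomputable def clusterMut {J : Type*} [DecidableEq J] (ε : J → J → ℤ) (k : J)
    (X : J → ℂ) : J → ℂ :=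
  fun j => if j = k then (X k)⁻¹ else X j * (1 + X k ^ (-(ε j k).sign)) ^ (-(ε j k))

theorem Int.cast_div_two_abs_mul_add_mul_abs {K : Type*} [DivisionRing K] [CharZero K]
    (a c : ℤ) : (((|a| * c + a * |c|) / 2 : ℤ) : K) = (|a| * c + a * |c| : K) / 2 := by
  have hev : 2 ∣ |a| * c + a * |c| := by
    rw [← even_iff_two_dvd, Int.even_add, Int.even_mul, Int.even_mul, even_abs, even_abs]
  rw [Int.cast_div hev (by norm_num)]
  push_cast
  rfl

theorem sum_sum_bracket_eq_of_logGrad {J R : Type*} [Fintype J] [CommSemiring R]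
    (ε : J → J → R) (X u v L M : J → R) (F G : R)
    (hu : ∀ a, X a * u a = F * L a) (hv : ∀ b, X b * v b = G * M b) :
    ∑ a, ∑ b, ε a b * X a * X b * u a * v b = F * G * ∑ a, ∑ b, ε a b * L a * M b := by
  simp_rw [Finset.mul_sum]
  refine Finset.sum_congr rfl fun a _ => Finset.sum_congr rfl fun b _ => ?_
  calc ε a b * X a * X b * u a * v b = ε a b * (X a * u a) * (X b * v b) := by ring
    _ = F * G * (ε a b * L a * M b) := by rw [hu, hv]; ring

theorem hasDerivAt_one_add_zpow_zpow (m n : ℤ) {x : ℂ} (hx : x ≠ 0) (hb : 1 + x ^ m ≠ 0) :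
    HasDerivAt (fun t : ℂ => (1 + t ^ m) ^ n)
      ((1 + x ^ m) ^ n * (n * m * (x ^ m / (1 + x ^ m))) / x) x := by
  have hin : HasDerivAt (fun t : ℂ => 1 + t ^ m) (m * x ^ (m - 1)) x :=
    (hasDerivAt_zpow m x (Or.inl hx)).const_add 1
  refine ((hasDerivAt_zpow n _ (Or.inl hb)).comp x hin).congr_deriv ?_
  rw [zpow_sub_one₀ hx, zpow_sub_one₀ hb]
  field_simp

section MutationFactor

variable {x : ℂ} (hx : x ≠ 0) (hx1 : 1 + x ≠ 0)
include hx hx1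

theorem one_add_zpow_neg_sign_ne_zero (e : ℤ) : 1 + x ^ (-e.sign) ≠ 0 := by
  rcases Int.sign_trichotomy e with h | h | h <;> rw [h]
  · rw [zpow_neg_one, ← mul_ne_zero_iff_right hx, add_mul, inv_mul_cancel₀ hx, one_mul, add_comm]
    exact hx1
  · norm_num
  · simpa using hx1

theorem zpow_neg_sign_div_one_add_zpow (e : ℤ) :
    x ^ (-e.sign) / (1 + x ^ (-e.sign)) = (1 + e.sign * ((1 - x) / (1 + x))) / 2 := by
  rcases Int.sign_trichotomy e with h | h | h <;> rw [h]
  · have hinv : 1 + x⁻¹ = (1 + x) / x := by field_simp; ring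
    simp only [Int.reduceNeg, zpow_neg, zpow_one, Int.cast_one, hinv]
    field_simp
    ring
  · norm_num
  · simp only [neg_neg, zpow_one, Int.reduceNeg, Int.cast_neg, Int.cast_one]
    field_simp
    ring

theorem hasDerivAt_one_add_zpow_neg_sign_zpow_neg (e : ℤ) :
    HasDerivAt (fun t : ℂ => (1 + t ^ (-e.sign)) ^ (-e))
      ((1 + x ^ (-e.sign)) ^ (-e) * ((|e| + e * ((1 - x) / (1 + x))) / 2) / x) x := by
  refine (hasDerivAt_one_add_zpow_zpow _ _ hx
    (one_add_zpow_neg_sign_ne_zero hx hx1 e)).congr_deriv ?_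
  have hsa : (e.sign : ℂ) * e = |e| := by exact_mod_cast Int.sign_mul_self_eq_abs e
  have hsb : (e.sign : ℂ) * |e| = e := by exact_mod_cast Int.sign_mul_abs e
  rw [zpow_neg_sign_div_one_add_zpow hx hx1]
  push_cast
  set t := (1 - x) / (1 + x)
  linear_combination (1 + x ^ (-e.sign)) ^ (-e) / x * ((1 / 2 + t * e.sign / 2) * hsa + t / 2 * hsb)

end MutationFactor

section ClusterMutation

variable {J : Type*} [DecidableEq J] (ε : J → J → ℤ) (k : J)

def matrixMutation (i j : J) : ℤ :=
  if i = k ∨ j = k then -ε i j else ε i j + (|ε i k| * ε k j + ε i k * |ε k j|) / 2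

noncomputable def clusterMutLogGrad (x : ℂ) (i : J) : J → ℂ :=
  if i = k then -Pi.single k 1
  else Pi.single i 1 + ((((|ε i k| : ℤ) : ℂ) + ε i k * ((1 - x) / (1 + x))) / 2) • Pi.single k 1

theorem mul_fderiv_clusterMut [Fintype J] {X : J → ℂ} (hXk : X k ≠ 0) (h1 : 1 + X k ≠ 0)
    (i a : J) :
    X a * fderiv ℂ (fun Y => clusterMut ε k Y i) X (Pi.single a 1) =
      clusterMut ε k X i * clusterMutLogGrad ε k (X k) i a := by
  by_cases hi : i = k
  · subst hi
    have hd := (hasDerivAt_inv hXk).comp_hasFDerivAt X (hasFDerivAt_apply (𝕜 := ℂ) i X)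
    simp only [clusterMut, if_true, Function.comp_def] at hd ⊢
    rw [hd.fderiv]
    rcases eq_or_ne a i with rfl | ha
    · simp only [smul_apply, ContinuousLinearMap.proj_apply,
        Pi.single_eq_same, smul_eq_mul, mul_one, mul_neg, clusterMutLogGrad, ↓reduceIte,
        Pi.neg_apply, neg_inj]
      field_simp
    · simp [clusterMutLogGrad, ha, Ne.symm ha]
  · have hd := (hasFDerivAt_apply (𝕜 := ℂ) i X).mul
      ((hasDerivAt_one_add_zpow_neg_sign_zpow_neg hXk h1 (ε i k)).comp_hasFDerivAt X
        (hasFDerivAt_apply (𝕜 := ℂ) k X))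
    simp only [clusterMut, hi, if_false, Function.comp_def, Pi.mul_def] at hd ⊢
    rw [hd.fderiv]
    rcases eq_or_ne a k with rfl | hak
    · simp only [zpow_neg, add_apply, smul_apply,
        ContinuousLinearMap.proj_apply, Pi.single_eq_same, Pi.single_eq_of_ne hi,
        Pi.single_eq_of_ne (Ne.symm hi), smul_eq_mul, mul_one, mul_zero, add_zero, zero_add,
        clusterMutLogGrad, hi, ↓reduceIte, Pi.add_apply, Pi.smul_apply]
      field_simp
    rcases eq_or_ne a i with rfl | hai
    · simp [clusterMutLogGrad, hi]
    · simp [clusterMutLogGrad, hi, hak, hai, Ne.symm hak, Ne.symm hai]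

theorem sum_sum_clusterMutLogGrad [Fintype J] (hskew : ∀ i j, ε i j = -ε j i) (x : ℂ)
    (i j : J) :
    ∑ a, ∑ b, (ε a b : ℂ) * clusterMutLogGrad ε k x i a * clusterMutLogGrad ε k x j b =
      matrixMutation ε k i j := by
  have hkk : ε k k = 0 := by linarith [hskew k k]
  unfold clusterMutLogGrad matrixMutation
  by_cases hi : i = k
  · by_cases hj : j = k <;> simp [hi, hj, hkk, Pi.single_apply, mul_add, Finset.sum_add_distrib]
  by_cases hj : j = k
  · simp [hi, hj, hkk, Pi.single_apply, mul_add, Finset.sum_add_distrib]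
  simp only [hi, hj, ↓reduceIte, or_self, Pi.add_apply, Pi.single_apply, Pi.smul_apply, smul_eq_mul,
    mul_ite, mul_one, mul_zero, mul_add, add_mul, ite_mul, zero_mul, Finset.sum_add_distrib,
    Finset.sum_ite_eq', Finset.mem_univ, hkk, Int.cast_zero, add_zero, Int.cast_add]
  rw [Int.cast_div_two_abs_mul_add_mul_abs, hskew k j, abs_neg]
  push_cast
  ring

end ClusterMutation

theorem stmt_5_general {J : Type*} [Fintype J] [DecidableEq J] (ε : J → J → ℤ) (k : J)
    (hskew : ∀ i j, ε i j = -ε j i)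
    (X : J → ℂ) (hX : ∀ j, X j ≠ 0)
    (h1 : 1 + X k ≠ 0)
    (ε' : J → J → ℤ)
    (hε' : ∀ i j, ε' i j = if i = k ∨ j = k then -ε i j
      else ε i j + (|ε i k| * ε k j + ε i k * |ε k j|) / 2) :
    ∀ i j : J,
      (∑ a : J, ∑ b : J, (ε a b : ℂ) * X a * X b *
          fderiv ℂ (fun Y => clusterMut ε k Y i) X (Pi.single a 1) *
          fderiv ℂ (fun Y => clusterMut ε k Y j) X (Pi.single b 1))
        = (ε' i j : ℂ) * clusterMut ε k X i * clusterMut ε k X j := by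
  intro i j
  have hε'ij : ε' i j = matrixMutation ε k i j := hε' i j
  rw [sum_sum_bracket_eq_of_logGrad _ _ _ _ _ _ _ _
      (mul_fderiv_clusterMut ε k (hX k) h1 i) (mul_fderiv_clusterMut ε k (hX k) h1 j),
    sum_sum_clusterMutLogGrad ε k hskew, hε'ij]
  ring

/-- Cluster mutation preserves the log-canonical Poisson structure
`{X_i, X_j} = ε_{ij} X_i X_j`: the bracket of the mutated coordinates, computed from the
original bracket via the chain rule (partial derivatives of the mutation map), equals
`ε′_{ij} X′_i X′_j`, where `ε′` is the mutated exchange matrix. -/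
theorem stmt_5 {J : Type*} [Fintype J] [DecidableEq J] (ε : J → J → ℤ) (k : J)
    (hskew : ∀ i j, ε i j = -ε j i)
    (X : J → ℂ) (hX : ∀ j, X j ≠ 0)
    (h1 : 1 + X k ≠ 0) (h2 : 1 + (X k)⁻¹ ≠ 0)
    (ε' : J → J → ℤ)
    (hε' : ∀ i j, ε' i j = if i = k ∨ j = k then -ε i j
      else ε i j + (|ε i k| * ε k j + ε i k * |ε k j|) / 2) :
    ∀ i j : J,
      (∑ a : J, ∑ b : J, (ε a b : ℂ) * X a * X b *
          fderiv ℂ (fun Y => clusterMut ε k Y i) X (Pi.single a 1) *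
          fderiv ℂ (fun Y => clusterMut ε k Y j) X (Pi.single b 1))
        = (ε' i j : ℂ) * clusterMut ε k X i * clusterMut ε k X j :=
  stmt_5_general ε k hskew X hX h1 ε' hε'
end

section
/- Let p₁, …, p_{n+3} (n ≥ 0) be cyclically ordered marked points and let ψ : {p₁, …, p_{n+3}} → ℂP¹ satisfy: (i) ψ(p_i) ≠ ψ(p_{i+1}) for all i (indices mod n+3), and (ii) the image of ψ contains at least three distinct points. Then there exists an ideal triangulation T of the (n+3)-gon such that for every edge (diagonal or side) of T, ψ assigns distinct points of ℂP¹ to its two endpoints. -/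
open OnePoint

/-- `p = (a, b)` with `a + 1 < b < m` (and not the pair `(0, m-1)`) is a diagonal of the
convex `m`-gon with vertices `0, 1, …, m-1` in counterclockwise order. -/
def IsDiag (m : ℕ) (p : ℕ × ℕ) : Prop :=
  p.1 + 1 < p.2 ∧ p.2 < m ∧ ¬(p.1 = 0 ∧ p.2 = m - 1)

/-- Two diagonals of a convex polygon cross iff their endpoints interlace. -/
def Cross (p q : ℕ × ℕ) : Prop :=
  (p.1 < q.1 ∧ q.1 < p.2 ∧ p.2 < q.2) ∨ (q.1 < p.1 ∧ p.1 < q.2 ∧ q.2 < p.2)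

/-- An ideal triangulation of the convex `m`-gon: a maximal (equivalently, of cardinality
`m - 3`) collection of pairwise noncrossing diagonals. -/
def IsTriangulation (m : ℕ) (T : Finset (ℕ × ℕ)) : Prop :=
  (∀ p ∈ T, IsDiag m p) ∧ (∀ p ∈ T, ∀ q ∈ T, ¬Cross p q) ∧ T.card = m - 3

/-- Boundary sides of the convex `m`-gon. -/
def IsSide (m : ℕ) (p : ℕ × ℕ) : Prop :=
  (p.2 = p.1 + 1 ∧ p.2 < m) ∨ (p.1 = 0 ∧ p.2 = m - 1 ∧ 2 ≤ m)

/-- Edges of a triangulation `T`: its diagonals together with the boundary sides. -/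
def IsEdge (m : ℕ) (T : Finset (ℕ × ℕ)) (p : ℕ × ℕ) : Prop := p ∈ T ∨ IsSide m p

/-!
Cut off ears. If some vertex `k` has neighbours with distinct `ψ`-values and `ψ` still takes three
values once `k` is deleted, the segment joining the two neighbours is a good diagonal and we recurse
on the remaining polygon. With at least four vertices such a `k` exists: if `ψ` is injective any
vertex will do; otherwise a vertex whose value is repeated can be deleted without losing a value,
and if all such vertices had equal neighbours, repetition would propagate around the cycle and
force `ψ` to be `2`-periodic, hence two-valued.
-/

open Finset

theorem Finset.image_erase_of_exists_ne {α β : Type*} [DecidableEq α] [DecidableEq β]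
    {f : α → β} {s : Finset α} {a : α} (h : ∃ b ∈ s, b ≠ a ∧ f b = f a) :
    (s.erase a).image f = s.image f := by
  obtain ⟨b, hb, hba, hfb⟩ := h
  refine (image_subset_image (erase_subset a s)).antisymm fun x hx => ?_
  obtain ⟨c, hc, rfl⟩ := mem_image.mp hx
  by_cases hca : c = a
  · exact mem_image.mpr ⟨b, mem_erase.mpr ⟨hba, hb⟩, hca ▸ hfb⟩
  · exact mem_image_of_mem f (mem_erase.mpr ⟨hca, hc⟩)

namespace Fin

open scoped Fin.NatCast Fin.CommRing

variable {n : ℕ}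

theorem forall_of_add_one {P : Fin (n + 1) → Prop} (i₀ : Fin (n + 1)) (h₀ : P i₀)
    (h : ∀ i, P i → P (i + 1)) (i : Fin (n + 1)) : P i := by
  have hk : ∀ k : ℕ, P (i₀ + k) := by
    intro k
    induction k with
    | zero => simpa using h₀
    | succ k ih => simpa [add_assoc] using h _ ih
  simpa using hk (i - i₀).val

theorem sub_one_ne_add_one (hn : 2 ≤ n) (i : Fin (n + 1)) : i - 1 ≠ i + 1 := by
  intro h
  have := congrArg Fin.val h
  rw [coe_sub_one, val_add_one] at this
  have hl : (last n : ℕ) = n := rfl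
  split_ifs at this with h0 h1 h1 <;> simp only [Fin.ext_iff, val_zero, hl] at h0 h1 <;> omega

theorem apply_eq_or_of_add_one_add_one {β : Type*} {f : Fin (n + 1) → β}
    (hf : ∀ i, f (i + 1 + 1) = f i) (i : Fin (n + 1)) : f i = f 0 ∨ f i = f 1 :=
  have hpair : ∀ i, (f i = f 0 ∧ f (i + 1) = f 1) ∨ (f i = f 1 ∧ f (i + 1) = f 0) :=
    forall_of_add_one 0 (.inl ⟨rfl, by simp⟩) fun i hi => by rw [hf]; tauto
  (hpair i).imp And.left And.left

theorem exists_apply_sub_one_ne_apply_add_one {β : Type*} [DecidableEq β] (hn : 3 ≤ n)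
    (f : Fin (n + 1) → β) (hf : 2 < #(univ.image f)) :
    ∃ i, f (i - 1) ≠ f (i + 1) ∧ 2 < #((univ.erase i).image f) := by
  by_cases hinj : Function.Injective f
  · refine ⟨0, hinj.ne (sub_one_ne_add_one (by omega) 0), ?_⟩
    rw [card_image_of_injective _ hinj, card_erase_of_mem (mem_univ _), card_univ,
      Fintype.card_fin]
    omega
  by_contra! H
  have hrep : ∀ i, (∃ j ≠ i, f j = f i) → f (i - 1) = f (i + 1) := by
    rintro i ⟨j, hji, hfj⟩
    by_contra hne
    have := H i hne
    rw [image_erase_of_exists_ne ⟨j, mem_univ j, hji, hfj⟩] at this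
    omega
  obtain ⟨i₀, j, hfij, hij⟩ := Function.not_injective_iff.mp hinj
  have hall : ∀ i, ∃ j ≠ i, f j = f i :=
    forall_of_add_one i₀ ⟨j, hij.symm, hfij.symm⟩ fun i hi =>
      ⟨i - 1, sub_one_ne_add_one (by omega) i, hrep i hi⟩
  have htwo := apply_eq_or_of_add_one_add_one (f := f) fun i => by
    simpa using (hrep (i + 1) (hall (i + 1))).symm
  have : univ.image f ⊆ {f 0, f 1} := by
    intro x hx
    obtain ⟨i, -, rfl⟩ := mem_image.mp hx
    simpa using htwo i
  have := (card_le_card this).trans card_le_two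
  omega

end Fin

section Ear

variable {α : Type*} [LinearOrder α]

/-- The segment `p` cuts off the single vertex `k` of the polygon with vertex set `S`: one of the
two arcs of `S` determined by `p` is `{k}`. -/
structure IsEar (S : Finset α) (k : α) (p : α × α) : Prop where
  fst_mem : p.1 ∈ S
  snd_mem : p.2 ∈ S
  mem : k ∈ S
  lt : p.1 < p.2
  arc_eq : (∀ c ∈ S, p.1 < c ∧ c < p.2 ↔ c = k) ∨ (∀ c ∈ S, c < p.1 ∨ p.2 < c ↔ c = k)

theorem IsEar.map {β : Type*} [LinearOrder β] {S : Finset α} {k : α} {p : α × α}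
    (h : IsEar S k p) (u : α ↪o β) :
    IsEar (S.map u.toEmbedding) (u k) (u p.1, u p.2) where
  fst_mem := mem_map_of_mem _ h.fst_mem
  snd_mem := mem_map_of_mem _ h.snd_mem
  mem := mem_map_of_mem _ h.mem
  lt := u.lt_iff_lt.mpr h.lt
  arc_eq := h.arc_eq.imp (fun h' => by simpa using h') (fun h' => by simpa using h')

theorem Fin.isEar_univ {n : ℕ} (hn : 2 ≤ n) (i : Fin (n + 1)) :
    IsEar univ i (i - 1, i + 1) ∨ IsEar univ i (i + 1, i - 1) := by
  have hsub := Fin.coe_sub_one i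
  have hadd := Fin.val_add_one i
  have hl : (Fin.last n : ℕ) = n := rfl
  split_ifs at hsub hadd with h0 h1 h1 <;> simp only [Fin.ext_iff, Fin.val_zero, hl] at h0 h1
  · omega
  all_goals first
    | exact .inl ⟨mem_univ _, mem_univ _, mem_univ _, by dsimp only; rw [Fin.lt_def]; omega,
        .inl fun c _ => by dsimp only; rw [Fin.lt_def, Fin.lt_def, Fin.ext_iff]; omega⟩
    | exact .inr ⟨mem_univ _, mem_univ _, mem_univ _, by dsimp only; rw [Fin.lt_def]; omega,
        .inr fun c _ => by
          dsimp only; rw [Fin.lt_def, Fin.lt_def, Fin.ext_iff]; have := c.isLt; omega⟩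

theorem Finset.exists_isEar {β : Type*} [DecidableEq β] (S : Finset α) (ψ : α → β)
    (hS : 4 ≤ #S) (hψ : 2 < #(S.image ψ)) :
    ∃ k p, IsEar S k p ∧ ψ p.1 ≠ ψ p.2 ∧ 2 < #((S.erase k).image ψ) := by
  obtain ⟨n, hn⟩ : ∃ n, #S = n + 1 := ⟨#S - 1, by omega⟩
  set u := S.orderEmbOfFin hn
  have hSu : univ.map u.toEmbedding = S := map_orderEmbOfFin_univ S hn
  have himage : ∀ s : Finset (Fin (n + 1)), (s.map u.toEmbedding).image ψ = s.image (ψ ∘ u) := by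
    intro s
    simp [map_eq_image, image_image]
  obtain ⟨i, hne, hcard⟩ := Fin.exists_apply_sub_one_ne_apply_add_one (by omega) (ψ ∘ u)
    (by rwa [← himage, hSu])
  have hcard' : 2 < #((S.erase (u i)).image ψ) := by
    rwa [← hSu, show (univ.map u.toEmbedding).erase (u i) = (univ.erase i).map u.toEmbedding
      from (map_erase _ _ _).symm, himage]
  rw [← hSu] at hcard' ⊢
  rcases Fin.isEar_univ (by omega) i with h | h
  · exact ⟨u i, _, h.map u, hne, hcard'⟩
  · exact ⟨u i, _, h.map u, hne.symm, hcard'⟩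

end Ear

/-- `p` is a diagonal of the convex polygon whose vertices are the points of `S` in increasing
order: both arcs of `S` determined by `p` are nonempty. Arbitrary vertex sets are needed because
cutting ears off `range m` leaves non-consecutive labels. -/
def IsDiagOn (S : Finset ℕ) (p : ℕ × ℕ) : Prop :=
  p.1 ∈ S ∧ p.2 ∈ S ∧ (∃ c ∈ S, p.1 < c ∧ c < p.2) ∧ (∃ c ∈ S, c < p.1 ∨ p.2 < c)

theorem IsDiagOn.mono {S S' : Finset ℕ} {p : ℕ × ℕ} (h : IsDiagOn S p) (hS : S ⊆ S') :
    IsDiagOn S' p := by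
  obtain ⟨h1, h2, ⟨c, hc, hc'⟩, ⟨d, hd, hd'⟩⟩ := h
  exact ⟨hS h1, hS h2, ⟨c, hS hc, hc'⟩, ⟨d, hS hd, hd'⟩⟩

theorem IsDiagOn.isDiag {m : ℕ} {p : ℕ × ℕ} (h : IsDiagOn (range m) p) : IsDiag m p := by
  obtain ⟨-, h2, ⟨c, hc, hc'⟩, ⟨d, hd, hd'⟩⟩ := h
  simp only [mem_range] at h2 hc hd
  exact ⟨by omega, h2, by omega⟩

theorem cross_comm {p q : ℕ × ℕ} : Cross p q ↔ Cross q p := or_comm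

theorem not_cross_self (p : ℕ × ℕ) : ¬Cross p p := by
  rintro (h | h) <;> omega

theorem isDiagOn_of_cross {S : Finset ℕ} {p q : ℕ × ℕ} (hpq : Cross p q) (hp1 : p.1 ∈ S)
    (hp2 : p.2 ∈ S) (hq1 : q.1 ∈ S) (hq2 : q.2 ∈ S) : IsDiagOn S p := by
  rcases hpq with h | h
  · exact ⟨hp1, hp2, ⟨q.1, hq1, h.1, h.2.1⟩, ⟨q.2, hq2, .inr h.2.2⟩⟩
  · exact ⟨hp1, hp2, ⟨q.2, hq2, h.2.1, h.2.2⟩, ⟨q.1, hq1, .inl h.1⟩⟩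

namespace IsEar

variable {S : Finset ℕ} {k : ℕ} {p : ℕ × ℕ}

theorem fst_mem_erase (h : IsEar S k p) : p.1 ∈ S.erase k := by
  refine Finset.mem_erase.mpr ⟨?_, h.fst_mem⟩
  rcases h.arc_eq with h' | h' <;> have := (h' k h.mem).mpr rfl <;> have := h.lt <;> omega

theorem snd_mem_erase (h : IsEar S k p) : p.2 ∈ S.erase k := by
  refine Finset.mem_erase.mpr ⟨?_, h.snd_mem⟩
  rcases h.arc_eq with h' | h' <;> have := (h' k h.mem).mpr rfl <;> have := h.lt <;> omega

theorem isDiagOn (h : IsEar S k p) (hS : 4 ≤ #S) : IsDiagOn S p := by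
  obtain ⟨c, hc, hc'⟩ := exists_mem_notMem_of_card_lt_card
    ((card_le_three (a := p.1) (b := p.2) (c := k)).trans_lt hS)
  simp only [mem_insert, mem_singleton, not_or] at hc'
  have hk := h.mem
  rcases h.arc_eq with h' | h'
  · have := (h' c hc).not.mpr hc'.2.2
    exact ⟨h.fst_mem, h.snd_mem, ⟨k, hk, (h' k hk).mpr rfl⟩, ⟨c, hc, by omega⟩⟩
  · have := (h' c hc).not.mpr hc'.2.2
    have := h.lt
    exact ⟨h.fst_mem, h.snd_mem, ⟨c, hc, by omega⟩, ⟨k, hk, (h' k hk).mpr rfl⟩⟩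

theorem not_isDiagOn_erase (h : IsEar S k p) : ¬IsDiagOn (S.erase k) p := by
  rintro ⟨-, -, ⟨c, hc, hc'⟩, ⟨d, hd, hd'⟩⟩
  rcases h.arc_eq with h' | h'
  · exact Finset.ne_of_mem_erase hc ((h' c (mem_of_mem_erase hc)).mp hc')
  · exact Finset.ne_of_mem_erase hd ((h' d (mem_of_mem_erase hd)).mp hd')

end IsEar

def IsTriangulationOn (S : Finset ℕ) (T : Finset (ℕ × ℕ)) : Prop :=
  (∀ p ∈ T, IsDiagOn S p) ∧ (∀ p ∈ T, ∀ q ∈ T, ¬Cross p q) ∧ #T + 3 = #S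

theorem IsTriangulationOn.insert_ear {S : Finset ℕ} {T : Finset (ℕ × ℕ)} {k : ℕ} {p : ℕ × ℕ}
    (hT : IsTriangulationOn (S.erase k) T) (h : IsEar S k p) (hS : 4 ≤ #S) :
    IsTriangulationOn S (insert p T) := by
  obtain ⟨hdiag, hcross, hcard⟩ := hT
  have hpT : p ∉ T := fun hp => h.not_isDiagOn_erase (hdiag p hp)
  have hpq : ∀ q ∈ T, ¬Cross p q := fun q hq hc =>
    h.not_isDiagOn_erase (isDiagOn_of_cross hc h.fst_mem_erase h.snd_mem_erase
      (hdiag q hq).1 (hdiag q hq).2.1)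
  refine ⟨?_, ?_, ?_⟩
  · simp only [mem_insert, forall_eq_or_imp]
    exact ⟨h.isDiagOn hS, fun q hq => (hdiag q hq).mono (erase_subset k S)⟩
  · simp only [mem_insert, forall_eq_or_imp]
    exact ⟨⟨not_cross_self p, hpq⟩,
      fun q hq => ⟨fun hc => hpq q hq (cross_comm.mp hc), hcross q hq⟩⟩
  · rw [card_insert_of_notMem hpT]
    have := card_erase_of_mem h.mem
    omega

theorem exists_isTriangulationOn {β : Type*} [DecidableEq β] (ψ : ℕ → β) (S : Finset ℕ)
    (hψ : 2 < #(S.image ψ)) :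
    ∃ T, IsTriangulationOn S T ∧ ∀ p ∈ T, ψ p.1 ≠ ψ p.2 := by
  obtain ⟨n, hn⟩ : ∃ n, #S = n + 3 := ⟨#S - 3, by have := card_image_le (s := S) (f := ψ); omega⟩
  induction n generalizing S with
  | zero => exact ⟨∅, ⟨by simp, by simp, by simp [hn]⟩, by simp⟩
  | succ n ih =>
    obtain ⟨k, p, hear, hp, hψ'⟩ := S.exists_isEar ψ (by omega) hψ
    obtain ⟨T, hT, hTψ⟩ := ih (S.erase k) hψ' (by rw [card_erase_of_mem hear.mem]; omega)
    refine ⟨insert p T, hT.insert_ear hear (by omega), ?_⟩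
    simp only [mem_insert, forall_eq_or_imp]
    exact ⟨hp, hTψ⟩

/-- If `ψ` assigns distinct points of `ℂP¹` to the endpoints of every boundary side, and its
image contains at least three distinct points, then there is an ideal triangulation `T` of
the `(n+3)`-gon such that `ψ` assigns distinct points to the endpoints of every edge of `T`. -/
theorem stmt_7 (n : ℕ) (ψ : ℕ → OnePoint ℂ)
    (h1 : ∀ p : ℕ × ℕ, IsSide (n + 3) p → ψ p.1 ≠ ψ p.2)
    (h2 : ∃ i j k, i < n + 3 ∧ j < n + 3 ∧ k < n + 3 ∧
      ψ i ≠ ψ j ∧ ψ j ≠ ψ k ∧ ψ i ≠ ψ k) :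
    ∃ T : Finset (ℕ × ℕ), IsTriangulation (n + 3) T ∧
      ∀ p : ℕ × ℕ, IsEdge (n + 3) T p → ψ p.1 ≠ ψ p.2 := by
  classical
  have hψ : 2 < #((range (n + 3)).image ψ) := by
    obtain ⟨i, j, k, hi, hj, hk, hij, hjk, hik⟩ := h2
    exact two_lt_card.mpr ⟨ψ i, mem_image_of_mem ψ (mem_range.mpr hi),
      ψ j, mem_image_of_mem ψ (mem_range.mpr hj), ψ k, mem_image_of_mem ψ (mem_range.mpr hk),
      hij, hik, hjk⟩
  obtain ⟨T, ⟨hdiag, hcross, hcard⟩, hTψ⟩ := exists_isTriangulationOn ψ _ hψ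
  rw [card_range] at hcard
  refine ⟨T, ⟨fun p hp => (hdiag p hp).isDiag, hcross, by omega⟩, ?_⟩
  rintro p (hp | hp)
  · exact hTψ p hp
  · exact h1 p hp
end

section
/- Given an ideal triangulation T of the (n+3)-gon and any assignment of a nonzero complex number X_j to each diagonal j of T, there exists a map ψ from the vertices of the polygon to ℂP¹, generic with respect to T and unique up to the diagonal action of PGL₂(ℂ), such that for every diagonal j the cross-ratio of the four vertices of the quadrilateral formed by the two triangles adjacent to j equals X_j. Consequently, cross-ratios give a bijection between PGL₂(ℂ)-orbits of T-generic configurations and (ℂ*)ⁿ. -/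
/-- A triangle of the triangulation `T`: three vertices pairwise joined by edges of `T`. -/
def IsTri (m : ℕ) (T : Finset (ℕ × ℕ)) (a b c : ℕ) : Prop :=
  a < b ∧ b < c ∧ IsEdge m T (a, b) ∧ IsEdge m T (b, c) ∧ IsEdge m T (a, c)

/-- `Quad m T p b d` : the diagonal `p = (p.1, p.2)` of `T` separates the two triangles
`p.1 b p.2` and (`d p.1 p.2` or `p.1 p.2 d`) of `T`; the vertices `p.1, b, p.2, d` of the
resulting quadrilateral are in counterclockwise order. -/
def Quad (m : ℕ) (T : Finset (ℕ × ℕ)) (p : ℕ × ℕ) (b d : ℕ) : Prop :=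
  IsTri m T p.1 b p.2 ∧
    ((d < p.1 ∧ IsTri m T d p.1 p.2) ∨ (p.2 < d ∧ IsTri m T p.1 p.2 d))

/-- The cross-ratio of four points. -/
noncomputable def crossRatio (z₁ z₂ z₃ z₄ : ℂ) : ℂ :=
  (z₁ - z₂) * (z₃ - z₄) / ((z₂ - z₃) * (z₁ - z₄))

/-!
Cut off an ear `i, i + 1, i + 2` of the triangulation; one exists because a set of noncrossing
diagonals of an `m`-gon has at most `m - 3` elements, which follows by cutting the polygon at a
diagonal of minimal span. The other diagonals triangulate the polygon without the tip `i + 1`,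
and the position of the tip is fixed by the cross-ratio across the ear diagonal `(i, i + 2)`
from the points at `i`, `i + 2` and at the apex of the triangle on the other side of that
diagonal. Existence and uniqueness up to Möbius maps then follow by induction on the number of
vertices, starting from the triangle, where a Möbius map through three points does the job.

The points live in `ℂ` rather than `ℂP¹`, so the solved tip may lie at infinity. For existence,
the configuration of the smaller polygon is first moved by an inversion `z ↦ 1 / (z - w)`
centred away from all its points and from the solution; for uniqueness, the same identity for
the denominator of the solution shows that the Möbius map given by induction has no pole at the
tip.
-/

open Finset

section CrossRatio

variable {x y z u X : ℂ}

lemma mul_eq_of_crossRatio_eq (hX : X ≠ 0) (h : crossRatio x u y z = X) :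
    (x - u) * (y - z) = X * ((u - y) * (x - z)) := by
  have hden : (u - y) * (x - z) ≠ 0 := by
    intro h0
    rw [crossRatio, h0, div_zero] at h
    exact hX h.symm
  rwa [crossRatio, div_eq_iff hden] at h

lemma eq_of_crossRatio_eq {u' : ℂ} (hX : X ≠ 0) (hxy : x ≠ y) (hyz : y ≠ z)
    (h : crossRatio x u y z = X) (h' : crossRatio x u' y z = X) : u = u' := by
  have e := mul_eq_of_crossRatio_eq hX h
  have e' := mul_eq_of_crossRatio_eq hX h'
  have key : ((y - z) * (x - y)) * (u' - u) = 0 := by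
    linear_combination (u' - y) * e - (u - y) * e'
  have hyzxy : (y - z) * (x - y) ≠ 0 := mul_ne_zero (sub_ne_zero.mpr hyz) (sub_ne_zero.mpr hxy)
  exact (sub_eq_zero.mp ((mul_eq_zero.mp key).resolve_left hyzxy)).symm

/-- The fourth point solving `crossRatio x · y z = X` is `∞` exactly when this vanishes. -/
lemma bracket_ne_zero_of_crossRatio_eq (hX : X ≠ 0) (hxy : x ≠ y) (hyz : y ≠ z)
    (h : crossRatio x u y z = X) : (y - z) + X * (x - z) ≠ 0 := by
  have e := mul_eq_of_crossRatio_eq hX h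
  intro hB
  have : (y - z) * (x - y) = 0 := by linear_combination e + (u - y) * hB
  exact mul_ne_zero (sub_ne_zero.mpr hyz) (sub_ne_zero.mpr hxy) this

lemma exists_crossRatio_eq (hX : X ≠ 0) (hxy : x ≠ y) (hyz : y ≠ z) (hxz : x ≠ z)
    (hB : (y - z) + X * (x - z) ≠ 0) :
    ∃ v, crossRatio x v y z = X ∧ v ≠ x ∧ v ≠ y := by
  have hxy' := sub_ne_zero.mpr hxy
  have hyz' := sub_ne_zero.mpr hyz
  have hxz' := sub_ne_zero.mpr hxz
  have hxv : x - (x * (y - z) + X * y * (x - z)) / ((y - z) + X * (x - z)) =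
      X * (x - y) * (x - z) / ((y - z) + X * (x - z)) := by
    field_simp; ring
  have hvy : (x * (y - z) + X * y * (x - z)) / ((y - z) + X * (x - z)) - y =
      (x - y) * (y - z) / ((y - z) + X * (x - z)) := by
    field_simp; ring
  generalize (x * (y - z) + X * y * (x - z)) / ((y - z) + X * (x - z)) = v at hxv hvy
  refine ⟨v, ?_, fun h => ?_, fun h => ?_⟩
  · rw [crossRatio, hxv, hvy]
    field_simp
  · rw [h, sub_self, eq_comm] at hxv
    exact div_ne_zero (mul_ne_zero (mul_ne_zero hX hxy') hxz') hB hxv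
  · rw [h, sub_self, eq_comm] at hvy
    exact div_ne_zero (mul_ne_zero hxy' hyz') hB hvy

end CrossRatio

noncomputable def moebius (a b c d z : ℂ) : ℂ := (a * z + b) / (c * z + d)

section Moebius

variable {a b c d s t x y z u : ℂ}

lemma moebius_sub (hs : c * s + d ≠ 0) (ht : c * t + d ≠ 0) :
    moebius a b c d s - moebius a b c d t =
      (a * d - b * c) * (s - t) / ((c * s + d) * (c * t + d)) := by
  rw [moebius, moebius, div_sub_div _ _ hs ht]
  ring

lemma moebius_ne (hdet : a * d - b * c ≠ 0) (hs : c * s + d ≠ 0) (ht : c * t + d ≠ 0)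
    (hst : s ≠ t) : moebius a b c d s ≠ moebius a b c d t := by
  rw [Ne, ← sub_eq_zero, moebius_sub hs ht]
  exact div_ne_zero (mul_ne_zero hdet (sub_ne_zero.mpr hst)) (mul_ne_zero hs ht)

lemma crossRatio_moebius (hdet : a * d - b * c ≠ 0) (hx : c * x + d ≠ 0) (hu : c * u + d ≠ 0)
    (hy : c * y + d ≠ 0) (hz : c * z + d ≠ 0) :
    crossRatio (moebius a b c d x) (moebius a b c d u) (moebius a b c d y) (moebius a b c d z) =
      crossRatio x u y z := by
  rw [crossRatio, crossRatio, moebius_sub hx hu, moebius_sub hy hz, moebius_sub hu hy,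
    moebius_sub hx hz, div_mul_div_comm, div_mul_div_comm,
    show (c * u + d) * (c * y + d) * ((c * x + d) * (c * z + d)) =
      (c * x + d) * (c * u + d) * ((c * y + d) * (c * z + d)) by ring,
    div_div_div_cancel_right₀ (mul_ne_zero (mul_ne_zero hx hu) (mul_ne_zero hy hz)),
    mul_div_mul_comm, mul_div_mul_left _ _ hdet, mul_div_mul_left _ _ hdet, ← mul_div_mul_comm]

lemma moebius_bracket (X : ℂ) (hx : c * x + d ≠ 0) (hy : c * y + d ≠ 0) (hz : c * z + d ≠ 0) :
    (moebius a b c d y - moebius a b c d z) + X * (moebius a b c d x - moebius a b c d z) =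
      (a * d - b * c) * ((y - z) * (c * x + d) + X * ((x - z) * (c * y + d))) /
        ((c * x + d) * (c * y + d) * (c * z + d)) := by
  rw [moebius_sub hy hz, moebius_sub hx hz]
  field_simp

lemma moebius_eq_of_mul_eq {p q : ℂ} (hp : c * p + d ≠ 0) (h : a * p + b = q * (c * p + d)) :
    moebius a b c d p = q := by
  rw [moebius, h, mul_div_cancel_right₀ _ hp]

lemma exists_moebius_three {x' y' z' : ℂ} (hxy : x ≠ y) (hyz : y ≠ z) (hxz : x ≠ z)
    (hxy' : x' ≠ y') (hyz' : y' ≠ z') (hxz' : x' ≠ z') :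
    ∃ a b c d : ℂ, a * d - b * c ≠ 0 ∧
      (c * x + d ≠ 0 ∧ moebius a b c d x = x') ∧ (c * y + d ≠ 0 ∧ moebius a b c d y = y') ∧
      (c * z + d ≠ 0 ∧ moebius a b c d z = z') := by
  have u₁ := sub_ne_zero.mpr hxy.symm
  have u₂ := sub_ne_zero.mpr hyz
  have u₃ := sub_ne_zero.mpr hxz
  have v₁ := sub_ne_zero.mpr hxy'.symm
  have v₂ := sub_ne_zero.mpr hyz'
  have v₃ := sub_ne_zero.mpr hxz'
  -- the map with `(w, x, y, z)` and `(w', x', y', z')` of equal cross-ratio, solved for `w'`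
  set a := x' * (y' - z') * (y - x) - z' * (y' - x') * (y - z)
  set b := z' * x * (y' - x') * (y - z) - x' * z * (y' - z') * (y - x)
  set c := (y' - z') * (y - x) - (y' - x') * (y - z)
  set d := (y' - x') * x * (y - z) - (y' - z') * z * (y - x)
  have hx : c * x + d = (y' - z') * (y - x) * (x - z) := by ring
  have hy : c * y + d = (x' - z') * (y - x) * (y - z) := by ring
  have hz : c * z + d = (y' - x') * (y - z) * (x - z) := by ring
  have hx0 : c * x + d ≠ 0 := by rw [hx]; exact mul_ne_zero (mul_ne_zero v₂ u₁) u₃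
  have hy0 : c * y + d ≠ 0 := by rw [hy]; exact mul_ne_zero (mul_ne_zero v₃ u₁) u₂
  have hz0 : c * z + d ≠ 0 := by rw [hz]; exact mul_ne_zero (mul_ne_zero v₁ u₂) u₃
  refine ⟨a, b, c, d, ?_, ⟨hx0, moebius_eq_of_mul_eq hx0 (by rw [hx]; ring)⟩,
    ⟨hy0, moebius_eq_of_mul_eq hy0 (by rw [hy]; ring)⟩,
    ⟨hz0, moebius_eq_of_mul_eq hz0 (by rw [hz]; ring)⟩⟩
  rw [show a * d - b * c = (y' - x') * (y' - z') * (x' - z') * ((y - x) * (y - z) * (x - z)) by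
    ring]
  exact mul_ne_zero (mul_ne_zero (mul_ne_zero v₁ v₂) v₃) (mul_ne_zero (mul_ne_zero u₁ u₂) u₃)

lemma moebius_eq_of_crossRatio_eq {X u' : ℂ} (hX : X ≠ 0) (hdet : a * d - b * c ≠ 0)
    (hx : c * x + d ≠ 0) (hy : c * y + d ≠ 0) (hz : c * z + d ≠ 0) (hxy : x ≠ y) (hyz : y ≠ z)
    (hu : crossRatio x u y z = X)
    (hu' : crossRatio (moebius a b c d x) u' (moebius a b c d y) (moebius a b c d z) = X) :
    c * u + d ≠ 0 ∧ u' = moebius a b c d u := by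
  have hxy' := moebius_ne hdet hx hy hxy
  have hyz' := moebius_ne hdet hy hz hyz
  have e := mul_eq_of_crossRatio_eq hX hu
  have hu_pole : c * u + d ≠ 0 := by
    intro hpole
    apply bracket_ne_zero_of_crossRatio_eq hX hxy' hyz' hu'
    rw [moebius_bracket X hx hy hz,
      show (y - z) * (c * x + d) + X * ((x - z) * (c * y + d)) = 0 by
        linear_combination c * e + ((y - z) + X * (x - z)) * hpole,
      mul_zero, zero_div]
  refine ⟨hu_pole, eq_of_crossRatio_eq hX hxy' hyz' hu' ?_⟩
  rw [crossRatio_moebius hdet hx hu_pole hy hz, hu]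

end Moebius

lemma exists_notMem_bracket_ne_zero (S : Finset ℂ) {x y z X : ℂ} (hX : X ≠ 0) (hxy : x ≠ y)
    (hxz : x ≠ z) : ∃ w ∉ S, (y - z) * (x - w) + X * ((x - z) * (y - w)) ≠ 0 := by
  by_cases hB : (y - z) + X * (x - z) = 0
  · obtain ⟨w, hw⟩ := Infinite.exists_notMem_finset S
    refine ⟨w, hw, ?_⟩
    rw [show (y - z) * (x - w) + X * ((x - z) * (y - w)) = X * (x - z) * (y - x) by
      linear_combination (x - w) * hB]
    exact mul_ne_zero (mul_ne_zero hX (sub_ne_zero.mpr hxz)) (sub_ne_zero.mpr hxy.symm)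
  · -- the only bad `w` is the finite solution of `crossRatio x · y z = X`
    obtain ⟨w, hw⟩ := Infinite.exists_notMem_finset
      (insert ((x * (y - z) + X * y * (x - z)) / ((y - z) + X * (x - z))) S)
    rw [Finset.mem_insert, not_or] at hw
    refine ⟨w, hw.2, fun h => hw.1 ?_⟩
    rw [eq_div_iff hB]
    linear_combination -h

section Polygon

variable {m : ℕ} {T : Finset (ℕ × ℕ)}

lemma isEdge_bounds (hd : ∀ p ∈ T, IsDiag m p) {p : ℕ × ℕ} (h : IsEdge m T p) :
    p.1 < p.2 ∧ p.2 < m := by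
  rcases h with h | h
  · obtain ⟨h₁, h₂, -⟩ := hd p h
    omega
  · unfold IsSide at h
    omega

lemma not_cross_of_isEdge (hd : ∀ p ∈ T, IsDiag m p) (hnc : ∀ p ∈ T, ∀ q ∈ T, ¬Cross p q)
    {p q : ℕ × ℕ} (hp : IsEdge m T p) (hq : IsEdge m T q) : ¬Cross p q := by
  intro hc
  have := isEdge_bounds hd hp
  have := isEdge_bounds hd hq
  rcases hp with hp | hp
  · rcases hq with hq | hq
    · exact hnc p hp q hq hc
    · unfold IsSide at hq
      unfold Cross at hc
      omega
  · unfold IsSide at hp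
    unfold Cross at hc
    omega

def IsOuterApex (m : ℕ) (T : Finset (ℕ × ℕ)) (p : ℕ × ℕ) (d : ℕ) : Prop :=
  (d < p.1 ∧ IsTri m T d p.1 p.2) ∨ (p.2 < d ∧ IsTri m T p.1 p.2 d)

variable (hd : ∀ p ∈ T, IsDiag m p) (hnc : ∀ p ∈ T, ∀ q ∈ T, ¬Cross p q)
include hd

lemma IsOuterApex.lt {p : ℕ × ℕ} {d : ℕ} (h : IsOuterApex m T p d) : d < m := by
  rcases h with ⟨-, -, -, -, -, e⟩ | ⟨-, -, -, -, e, -⟩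
  · have := isEdge_bounds hd e
    omega
  · exact (isEdge_bounds hd e).2

include hnc

lemma IsOuterApex.le {p : ℕ × ℕ} {d d' : ℕ} (h : IsOuterApex m T p d)
    (h' : IsOuterApex m T p d') : d ≤ d' := by
  by_contra! hlt
  rcases h' with ⟨hdp, -, hp, e₁, -, e₃⟩ | ⟨hdp, hp, -, -, e₂, e₃⟩ <;>
    rcases h with ⟨hdp', -, -, -, -, f₃⟩ | ⟨hdp', -, -, -, f₂, f₃⟩
  · exact not_cross_of_isEdge hd hnc e₁ f₃ (by simp only [Cross]; omega)
  · exact not_cross_of_isEdge hd hnc e₃ f₃ (by simp only [Cross]; omega)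
  · omega
  · exact not_cross_of_isEdge hd hnc e₃ f₂ (by simp only [Cross]; omega)

lemma IsOuterApex.unique {p : ℕ × ℕ} {d d' : ℕ} (h : IsOuterApex m T p d)
    (h' : IsOuterApex m T p d') : d = d' :=
  le_antisymm (h.le hd hnc h') (h'.le hd hnc h)

lemma not_incident_of_min_span {p : ℕ × ℕ} (hp : p ∈ T) (hmin : ∀ q ∈ T, p.2 - p.1 ≤ q.2 - q.1) :
    ∀ q ∈ T, q.1 ≠ p.1 + 1 ∧ q.2 ≠ p.1 + 1 := by
  intro q hq
  have := hd p hp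
  have := hd q hq
  have := hmin q hq
  have := hnc p hp q hq
  unfold IsDiag Cross at *
  omega

end Polygon

def liftVert (i j : ℕ) : ℕ := if j ≤ i then j else j + 1

def dropVert (i j : ℕ) : ℕ := if j ≤ i then j else j - 1

section Renumbering

variable {i j j' : ℕ}

@[simp]
lemma dropVert_liftVert : dropVert i (liftVert i j) = j := by
  unfold dropVert liftVert; split_ifs <;> omega

lemma liftVert_dropVert (h : j ≠ i + 1) : liftVert i (dropVert i j) = j := by
  unfold dropVert liftVert; split_ifs <;> omega

lemma liftVert_strictMono : StrictMono (liftVert i) := by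
  intro j j' h
  unfold liftVert; split_ifs <;> omega

lemma liftVert_ne : liftVert i j ≠ i + 1 := by
  unfold liftVert; split_ifs <;> omega

lemma lt_of_dropVert_lt (h : dropVert i j < dropVert i j') : j < j' := by
  unfold dropVert at h; split_ifs at h <;> omega

lemma dropVert_lt_dropVert (hj' : j' ≠ i + 1) (h : j < j') :
    dropVert i j < dropVert i j' := by
  unfold dropVert; split_ifs <;> omega

@[simp] lemma liftVert_self : liftVert i i = i := by simp [liftVert]

@[simp] lemma liftVert_succ_self : liftVert i (i + 1) = i + 2 := by simp [liftVert]

@[simp] lemma dropVert_self : dropVert i i = i := by simp [dropVert]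

@[simp] lemma dropVert_add_two : dropVert i (i + 2) = i + 1 := by simp [dropVert]

end Renumbering

/-- The other diagonals after cutting off the triangle `i, i + 1, i + 2`, renumbered for the
polygon without the vertex `i + 1`. -/
def cutEar (i : ℕ) (D : Finset (ℕ × ℕ)) : Finset (ℕ × ℕ) :=
  (D.erase (i, i + 2)).image (Prod.map (dropVert i) (dropVert i))

section CutEar

variable {m i : ℕ} {D : Finset (ℕ × ℕ)}

lemma map_dropVert_mem_cutEar {q : ℕ × ℕ} (hq : q ∈ D) (hne : q ≠ (i, i + 2)) :
    Prod.map (dropVert i) (dropVert i) q ∈ cutEar i D :=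
  mem_image_of_mem _ (mem_erase.2 ⟨hne, hq⟩)

variable (hno : ∀ q ∈ D, q.1 ≠ i + 1 ∧ q.2 ≠ i + 1)
include hno

lemma map_liftVert_mem_of_mem_cutEar {q : ℕ × ℕ} (hq : q ∈ cutEar i D) :
    Prod.map (liftVert i) (liftVert i) q ∈ D.erase (i, i + 2) := by
  obtain ⟨q₀, hq₀, rfl⟩ := mem_image.1 hq
  obtain ⟨h₁, h₂⟩ := hno q₀ (mem_of_mem_erase hq₀)
  rwa [show Prod.map (liftVert i) (liftVert i) (Prod.map (dropVert i) (dropVert i) q₀) = q₀ from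
    Prod.ext (liftVert_dropVert h₁) (liftVert_dropVert h₂)]

lemma card_cutEar : (cutEar i D).card = (D.erase (i, i + 2)).card := by
  refine card_image_of_injOn fun q hq r hr h => ?_
  obtain ⟨q₁, q₂⟩ := hno q (mem_of_mem_erase hq)
  obtain ⟨r₁, r₂⟩ := hno r (mem_of_mem_erase hr)
  simp only [Prod.map, Prod.mk.injEq] at h
  exact Prod.ext (by rw [← liftVert_dropVert q₁, h.1, liftVert_dropVert r₁])
    (by rw [← liftVert_dropVert q₂, h.2, liftVert_dropVert r₂])

lemma isDiag_of_mem_cutEar (hd : ∀ p ∈ D, IsDiag (m + 1) p) (hi : i + 2 ≤ m) :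
    ∀ q ∈ cutEar i D, IsDiag m q := by
  intro q hq
  obtain ⟨q₀, hq₀, rfl⟩ := mem_image.1 hq
  obtain ⟨hne, hq₀⟩ := mem_erase.1 hq₀
  have hne : ¬(q₀.1 = i ∧ q₀.2 = i + 2) := fun h => hne (Prod.ext h.1 h.2)
  have := hd q₀ hq₀
  have := hno q₀ hq₀
  simp only [IsDiag, Prod.map_fst, Prod.map_snd, dropVert] at *
  split_ifs <;> omega

omit hno in
lemma not_cross_of_mem_cutEar (hnc : ∀ p ∈ D, ∀ q ∈ D, ¬Cross p q) :
    ∀ q ∈ cutEar i D, ∀ r ∈ cutEar i D, ¬Cross q r := by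
  intro q hq r hr hc
  obtain ⟨q₀, hq₀, rfl⟩ := mem_image.1 hq
  obtain ⟨r₀, hr₀, rfl⟩ := mem_image.1 hr
  apply hnc q₀ (mem_of_mem_erase hq₀) r₀ (mem_of_mem_erase hr₀)
  simp only [Cross, Prod.map_fst, Prod.map_snd] at hc ⊢
  rcases hc with ⟨h₁, h₂, h₃⟩ | ⟨h₁, h₂, h₃⟩
  exacts [Or.inl ⟨lt_of_dropVert_lt h₁, lt_of_dropVert_lt h₂, lt_of_dropVert_lt h₃⟩,
    Or.inr ⟨lt_of_dropVert_lt h₁, lt_of_dropVert_lt h₂, lt_of_dropVert_lt h₃⟩]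

end CutEar

theorem card_le_of_noncrossing {m : ℕ} {D : Finset (ℕ × ℕ)} (hd : ∀ p ∈ D, IsDiag m p)
    (hnc : ∀ p ∈ D, ∀ q ∈ D, ¬Cross p q) : D.card ≤ m - 3 := by
  induction m generalizing D with
  | zero =>
    rw [card_eq_zero.2 (eq_empty_of_forall_notMem fun p hp => by
      have := hd p hp
      unfold IsDiag at this
      omega)]
  | succ m ih =>
    rcases D.eq_empty_or_nonempty with rfl | hne
    · simp
    obtain ⟨p, hp, hmin⟩ := D.exists_min_image (fun q => q.2 - q.1) hne
    have hno := not_incident_of_min_span hd hnc hp hmin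
    have hp' := hd p hp
    unfold IsDiag at hp'
    have hcut := ih (isDiag_of_mem_cutEar hno hd (by omega)) (not_cross_of_mem_cutEar hnc)
    rw [card_cutEar hno] at hcut
    have := pred_card_le_card_erase (s := D) (a := (p.1, p.1 + 2))
    omega

structure IsEar_s9 (m : ℕ) (T : Finset (ℕ × ℕ)) (i : ℕ) : Prop where
  mem : (i, i + 2) ∈ T
  lt : i + 2 < m
  tip_free : ∀ q ∈ T, q.1 ≠ i + 1 ∧ q.2 ≠ i + 1

theorem IsTriangulation.exists_isEar {m : ℕ} {T : Finset (ℕ × ℕ)} (hT : IsTriangulation m T)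
    (hm : 4 ≤ m) : ∃ i, IsEar_s9 m T i := by
  obtain ⟨hd, hnc, hcard⟩ := hT
  obtain ⟨p, hp, hmin⟩ := T.exists_min_image (fun q => q.2 - q.1)
    (card_pos.1 (by omega))
  have hp' := hd p hp
  unfold IsDiag at hp'
  have hno := not_incident_of_min_span hd hnc hp hmin
  by_cases hs : p.2 = p.1 + 2
  · exact ⟨p.1, by rwa [← hs], by omega, hno⟩
  · -- otherwise cutting off `p.1 + 1` would leave too many diagonals
    have hnot : (p.1, p.1 + 2) ∉ T := fun h => by
      have := hmin _ h
      dsimp only at this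
      omega
    obtain ⟨m, rfl⟩ : ∃ m', m = m' + 1 := ⟨m - 1, by omega⟩
    have hcut := card_le_of_noncrossing (isDiag_of_mem_cutEar hno hd (by omega))
      (not_cross_of_mem_cutEar (i := p.1) hnc)
    rw [card_cutEar hno, erase_eq_of_notMem hnot] at hcut
    omega

namespace IsEar_s9

variable {m i : ℕ} {T : Finset (ℕ × ℕ)} (hE : IsEar_s9 (m + 1) T i)
include hE

lemma isTri : IsTri (m + 1) T i (i + 1) (i + 2) := by
  have := hE.lt
  exact ⟨by omega, by omega, Or.inr (Or.inl ⟨rfl, by omega⟩), Or.inr (Or.inl ⟨rfl, by omega⟩),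
    Or.inl hE.mem⟩

lemma isEdge_lift {p : ℕ × ℕ} (h : IsEdge m (cutEar i T) p) :
    IsEdge (m + 1) T (Prod.map (liftVert i) (liftVert i) p) := by
  obtain ⟨a, b⟩ := p
  rcases h with h | h
  · exact Or.inl (mem_of_mem_erase (map_liftVert_mem_of_mem_cutEar hE.tip_free h))
  by_cases hab : a = i ∧ b = i + 1
  · obtain ⟨rfl, rfl⟩ := hab
    simp only [Prod.map, liftVert_self, liftVert_succ_self]
    exact Or.inl hE.mem
  · have := hE.lt
    right
    simp only [IsSide, Prod.map, liftVert] at h hab ⊢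
    split_ifs <;> omega

lemma isEdge_drop {p : ℕ × ℕ} (h : IsEdge (m + 1) T p) (h₁ : p.1 ≠ i + 1) (h₂ : p.2 ≠ i + 1) :
    IsEdge m (cutEar i T) (Prod.map (dropVert i) (dropVert i) p) := by
  have := hE.lt
  by_cases hp : p = (i, i + 2)
  · subst hp
    exact Or.inr (Or.inl ⟨by simp, by simp; omega⟩)
  rcases h with h | h
  · exact Or.inl (map_dropVert_mem_cutEar h hp)
  · right
    simp only [IsSide, Prod.map, dropVert] at h ⊢
    split_ifs <;> omega

lemma eq_of_isEdge_tip_left {a : ℕ} (h : IsEdge (m + 1) T (a, i + 1)) : a = i := by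
  have := hE.lt
  rcases h with h | h
  · exact absurd rfl (hE.tip_free _ h).2
  · unfold IsSide at h
    omega

lemma eq_of_isEdge_tip_right {b : ℕ} (h : IsEdge (m + 1) T (i + 1, b)) : b = i + 2 := by
  rcases h with h | h
  · exact absurd rfl (hE.tip_free _ h).1
  · unfold IsSide at h
    omega

lemma isTri_lift {a b c : ℕ} (h : IsTri m (cutEar i T) a b c) :
    IsTri (m + 1) T (liftVert i a) (liftVert i b) (liftVert i c) := by
  obtain ⟨hab, hbc, e₁, e₂, e₃⟩ := h
  exact ⟨liftVert_strictMono hab, liftVert_strictMono hbc, hE.isEdge_lift e₁, hE.isEdge_lift e₂,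
    hE.isEdge_lift e₃⟩

lemma isTri_drop {a b c : ℕ} (h : IsTri (m + 1) T a b c) (ha : a ≠ i + 1) (hb : b ≠ i + 1)
    (hc : c ≠ i + 1) : IsTri m (cutEar i T) (dropVert i a) (dropVert i b) (dropVert i c) := by
  obtain ⟨hab, hbc, e₁, e₂, e₃⟩ := h
  exact ⟨dropVert_lt_dropVert hb hab, dropVert_lt_dropVert hc hbc, hE.isEdge_drop e₁ ha hb,
    hE.isEdge_drop e₂ hb hc, hE.isEdge_drop e₃ ha hc⟩

lemma isOuterApex_lift {q : ℕ × ℕ} {e : ℕ} (h : IsOuterApex m (cutEar i T) q e) :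
    IsOuterApex (m + 1) T (Prod.map (liftVert i) (liftVert i) q) (liftVert i e) := by
  rcases h with ⟨hlt, ht⟩ | ⟨hlt, ht⟩
  exacts [Or.inl ⟨liftVert_strictMono hlt, hE.isTri_lift ht⟩,
    Or.inr ⟨liftVert_strictMono hlt, hE.isTri_lift ht⟩]

lemma quad_lift {q : ℕ × ℕ} {b d : ℕ} (h : Quad m (cutEar i T) q b d) :
    Quad (m + 1) T (Prod.map (liftVert i) (liftVert i) q) (liftVert i b) (liftVert i d) :=
  ⟨hE.isTri_lift h.1, hE.isOuterApex_lift h.2⟩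

lemma quad_of_isOuterApex {e : ℕ} (h : IsOuterApex m (cutEar i T) (i, i + 1) e) :
    Quad (m + 1) T (i, i + 2) (i + 1) (liftVert i e) := by
  have := hE.isOuterApex_lift h
  simp only [Prod.map, liftVert_self, liftVert_succ_self] at this
  exact ⟨hE.isTri, this⟩

lemma quad_drop {p : ℕ × ℕ} {b d : ℕ} (hp : p ∈ T) (hne : p ≠ (i, i + 2))
    (h : Quad (m + 1) T p b d) :
    b ≠ i + 1 ∧ d ≠ i + 1 ∧
      Quad m (cutEar i T) (Prod.map (dropVert i) (dropVert i) p) (dropVert i b) (dropVert i d) := by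
  obtain ⟨h₁, h₂⟩ := hE.tip_free p hp
  obtain ⟨⟨o₁, o₂, e₁, e₂, e₃⟩, ho⟩ := h
  have hb : b ≠ i + 1 := by
    rintro rfl
    exact hne (Prod.ext (hE.eq_of_isEdge_tip_left e₁) (hE.eq_of_isEdge_tip_right e₂))
  have hd : d ≠ i + 1 := by
    rintro rfl
    rcases ho with ⟨-, -, o, f₁, -, f₃⟩ | ⟨-, -, o, -, f₂, f₃⟩
    · have := hE.eq_of_isEdge_tip_right f₁
      have := hE.eq_of_isEdge_tip_right f₃
      omega
    · have := hE.eq_of_isEdge_tip_left f₂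
      have := hE.eq_of_isEdge_tip_left f₃
      omega
  refine ⟨hb, hd, hE.isTri_drop ⟨o₁, o₂, e₁, e₂, e₃⟩ h₁ hb h₂, ?_⟩
  rcases ho with ⟨o, ht⟩ | ⟨o, ht⟩
  exacts [Or.inl ⟨dropVert_lt_dropVert h₁ o, hE.isTri_drop ht hd h₁ h₂⟩,
    Or.inr ⟨dropVert_lt_dropVert hd o, hE.isTri_drop ht h₁ h₂ hd⟩]

end IsEar_s9

theorem IsTriangulation.cutEar {m i : ℕ} {T : Finset (ℕ × ℕ)} (hT : IsTriangulation (m + 1) T)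
    (hE : IsEar_s9 (m + 1) T i) : IsTriangulation m (cutEar i T) := by
  obtain ⟨hd, hnc, hcard⟩ := hT
  have := hE.lt
  refine ⟨isDiag_of_mem_cutEar hE.tip_free hd (by omega), not_cross_of_mem_cutEar hnc, ?_⟩
  rw [card_cutEar hE.tip_free, card_erase_of_mem hE.mem, hcard]
  omega

theorem IsTriangulation.exists_isOuterApex_side {m : ℕ} (hm : 3 ≤ m) {T : Finset (ℕ × ℕ)}
    (hT : IsTriangulation m T) {i : ℕ} (hi : i + 2 ≤ m) : ∃ e, IsOuterApex m T (i, i + 1) e := by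
  induction m, hm using Nat.le_induction generalizing T i with
  | base =>
    have htri : IsTri 3 T 0 1 2 := ⟨by norm_num, by norm_num, Or.inr (Or.inl ⟨rfl, by norm_num⟩),
      Or.inr (Or.inl ⟨rfl, by norm_num⟩), Or.inr (Or.inr ⟨rfl, rfl, by norm_num⟩)⟩
    obtain rfl | rfl : i = 0 ∨ i = 1 := by omega
    exacts [⟨2, Or.inr ⟨by norm_num, htri⟩⟩, ⟨0, Or.inl ⟨by norm_num, htri⟩⟩]
  | succ m hm ih =>
    obtain ⟨j, hE⟩ := hT.exists_isEar (by omega)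
    have := hE.lt
    by_cases hij : i = j
    · exact ⟨i + 2, Or.inr ⟨by omega, hij ▸ hE.isTri⟩⟩
    by_cases hij' : i = j + 1
    · exact ⟨j, Or.inl ⟨by omega, hij' ▸ hE.isTri⟩⟩
    obtain ⟨e, he⟩ := ih (hT.cutEar hE) (i := dropVert j i) (by
      unfold dropVert; split_ifs <;> omega)
    have h₁ : liftVert j (dropVert j i) = i := liftVert_dropVert hij'
    have h₂ : liftVert j (dropVert j i + 1) = i + 1 := by
      unfold liftVert dropVert; split_ifs <;> omega
    refine ⟨liftVert j e, ?_⟩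
    simpa [h₁, h₂] using hE.isOuterApex_lift he

def IsRealization (m : ℕ) (T : Finset (ℕ × ℕ)) (X : ℕ × ℕ → ℂ) (ψ : ℕ → ℂ) : Prop :=
  (∀ p : ℕ × ℕ, IsEdge m T p → ψ p.1 ≠ ψ p.2) ∧
    ∀ p ∈ T, ∀ b d : ℕ, Quad m T p b d → crossRatio (ψ p.1) (ψ b) (ψ p.2) (ψ d) = X p

namespace IsRealization

variable {m i : ℕ} {T : Finset (ℕ × ℕ)} {X : ℕ × ℕ → ℂ} {ψ : ℕ → ℂ}

lemma ne_of_isOuterApex (h : IsRealization m T X ψ) {p : ℕ × ℕ} {e : ℕ}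
    (he : IsOuterApex m T p e) : ψ p.1 ≠ ψ p.2 ∧ ψ p.2 ≠ ψ e ∧ ψ p.1 ≠ ψ e := by
  rcases he with ⟨-, -, -, e₁, e₂, e₃⟩ | ⟨-, -, -, e₁, e₂, e₃⟩
  exacts [⟨h.1 _ e₂, (h.1 _ e₃).symm, (h.1 _ e₁).symm⟩, ⟨h.1 _ e₁, h.1 _ e₂, h.1 _ e₃⟩]

lemma moebius (hd : ∀ p ∈ T, IsDiag m p) (h : IsRealization m T X ψ) {a b c d : ℂ}
    (hdet : a * d - b * c ≠ 0) (hpole : ∀ j < m, c * ψ j + d ≠ 0) :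
    IsRealization m T X (fun j => moebius a b c d (ψ j)) := by
  refine ⟨fun p hp => ?_, fun p hp k l hq => ?_⟩
  · have := isEdge_bounds hd hp
    exact moebius_ne hdet (hpole _ (by omega)) (hpole _ this.2) (h.1 p hp)
  · obtain ⟨⟨h₁, h₂, -, e, -⟩, ho⟩ := id hq
    have := (isEdge_bounds hd e).2
    have := IsOuterApex.lt hd ho
    rw [crossRatio_moebius hdet (hpole _ (by omega)) (hpole _ (by omega)) (hpole _ (by omega))
      (hpole _ (by omega))]
    exact h.2 p hp k l hq

lemma comp_liftVert (hE : IsEar_s9 (m + 1) T i) (h : IsRealization (m + 1) T X ψ) :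
    IsRealization m (cutEar i T) (X ∘ Prod.map (liftVert i) (liftVert i)) (ψ ∘ liftVert i) :=
  ⟨fun _ hp => h.1 _ (hE.isEdge_lift hp), fun _ hp _ _ hq =>
    h.2 _ (mem_of_mem_erase (map_liftVert_mem_of_mem_cutEar hE.tip_free hp)) _ _ (hE.quad_lift hq)⟩

lemma extend (hd : ∀ p ∈ T, IsDiag (m + 1) p) (hnc : ∀ p ∈ T, ∀ q ∈ T, ¬Cross p q)
    (hE : IsEar_s9 (m + 1) T i) {ψ₀ : ℕ → ℂ}
    (h₀ : IsRealization m (cutEar i T) (X ∘ Prod.map (liftVert i) (liftVert i)) ψ₀) {e : ℕ}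
    (he : IsOuterApex m (cutEar i T) (i, i + 1) e) {v : ℂ}
    (hv : crossRatio (ψ₀ i) v (ψ₀ (i + 1)) (ψ₀ e) = X (i, i + 2)) (hvi : v ≠ ψ₀ i)
    (hvi' : v ≠ ψ₀ (i + 1)) :
    IsRealization (m + 1) T X (Function.update (ψ₀ ∘ dropVert i) (i + 1) v) := by
  set ψ := Function.update (ψ₀ ∘ dropVert i) (i + 1) v
  have htip : ψ (i + 1) = v := Function.update_self ..
  have hψ : ∀ j ≠ i + 1, ψ j = ψ₀ (dropVert i j) := fun j hj => Function.update_of_ne hj ..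
  refine ⟨fun p hp => ?_, fun p hp b d hq => ?_⟩
  · obtain ⟨a, b⟩ := p
    dsimp only
    by_cases h₁ : a = i + 1
    · subst h₁
      rw [hE.eq_of_isEdge_tip_right hp, htip, hψ _ (by omega), dropVert_add_two]
      exact hvi'
    by_cases h₂ : b = i + 1
    · subst h₂
      rw [hE.eq_of_isEdge_tip_left hp, htip, hψ _ (by omega), dropVert_self]
      exact hvi.symm
    rw [hψ _ h₁, hψ _ h₂]
    exact h₀.1 _ (hE.isEdge_drop hp h₁ h₂)
  by_cases hpe : p = (i, i + 2)
  · subst hpe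
    obtain rfl : b = i + 1 := by
      have := hq.1
      unfold IsTri at this
      omega
    obtain rfl : d = liftVert i e := IsOuterApex.unique hd hnc hq.2 (hE.quad_of_isOuterApex he).2
    rw [htip, hψ _ (by omega), hψ _ (by omega), hψ _ liftVert_ne, dropVert_self, dropVert_add_two,
      dropVert_liftVert]
    exact hv
  obtain ⟨hb, hd', hq'⟩ := hE.quad_drop hp hpe hq
  obtain ⟨h₁, h₂⟩ := hE.tip_free p hp
  have := h₀.2 _ (map_dropVert_mem_cutEar hp hpe) _ _ hq'
  rw [Function.comp_apply, show Prod.map (liftVert i) (liftVert i)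
    (Prod.map (dropVert i) (dropVert i) p) = p from
      Prod.ext (liftVert_dropVert h₁) (liftVert_dropVert h₂)] at this
  rw [hψ _ h₁, hψ _ h₂, hψ _ hb, hψ _ hd']
  exact this

end IsRealization

theorem IsTriangulation.exists_isRealization {m : ℕ} (hm : 3 ≤ m) {T : Finset (ℕ × ℕ)}
    (hT : IsTriangulation m T) {X : ℕ × ℕ → ℂ} (hX : ∀ p ∈ T, X p ≠ 0) :
    ∃ ψ, IsRealization m T X ψ := by
  induction m, hm using Nat.le_induction generalizing T X with
  | base =>
    refine ⟨Nat.cast, fun p hp => ?_, fun p hp => ?_⟩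
    · exact Nat.cast_injective.ne (isEdge_bounds hT.1 hp).1.ne
    · simp [card_eq_zero.1 hT.2.2] at hp
  | succ m hm ih =>
    obtain ⟨i, hE⟩ := hT.exists_isEar (by omega)
    have := hE.lt
    have hcut := hT.cutEar hE
    have hXi := hX _ hE.mem
    obtain ⟨ψ₀, h₀⟩ := ih hcut fun q hq =>
      hX _ (mem_of_mem_erase (map_liftVert_mem_of_mem_cutEar hE.tip_free hq))
    obtain ⟨e, he⟩ := hcut.exists_isOuterApex_side hm (i := i) (by omega)
    obtain ⟨hxy, -, hxz⟩ := h₀.ne_of_isOuterApex he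
    -- invert in a point `w` chosen so that the new vertex does not land at infinity
    obtain ⟨w, hwS, hw⟩ := exists_notMem_bracket_ne_zero ((range m).image ψ₀) hXi hxy hxz
    have hpole : ∀ j < m, 1 * ψ₀ j + -w ≠ 0 := fun j hj h =>
      hwS (mem_image.2 ⟨j, mem_range.2 hj, by linear_combination h⟩)
    have h₁ := h₀.moebius hcut.1 (by norm_num : (0 : ℂ) * -w - 1 * 1 ≠ 0) hpole
    obtain ⟨hxy₁, hyz₁, hxz₁⟩ := h₁.ne_of_isOuterApex he
    have hx := hpole i (by omega)
    have hy := hpole (i + 1) (by omega)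
    have hz := hpole e (IsOuterApex.lt hcut.1 he)
    obtain ⟨v, hv, hvx, hvy⟩ := exists_crossRatio_eq hXi hxy₁ hyz₁ hxz₁ (by
      rw [moebius_bracket _ hx hy hz]
      refine div_ne_zero (mul_ne_zero (by norm_num) ?_) (mul_ne_zero (mul_ne_zero hx hy) hz)
      convert hw using 1
      ring)
    exact ⟨_, h₁.extend (ψ₀ := fun j => moebius 0 1 1 (-w) (ψ₀ j)) hT.1 hT.2.1 hE he hv hvx hvy⟩

theorem IsTriangulation.isRealization_unique {m : ℕ} (hm : 3 ≤ m) {T : Finset (ℕ × ℕ)}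
    (hT : IsTriangulation m T) {X : ℕ × ℕ → ℂ} (hX : ∀ p ∈ T, X p ≠ 0) {ψ ψ' : ℕ → ℂ}
    (h : IsRealization m T X ψ) (h' : IsRealization m T X ψ') :
    ∃ a b c d : ℂ, a * d - b * c ≠ 0 ∧
      ∀ j < m, c * ψ j + d ≠ 0 ∧ ψ' j = moebius a b c d (ψ j) := by
  induction m, hm using Nat.le_induction generalizing T X ψ ψ' with
  | base =>
    have e₀₁ : IsEdge 3 T (0, 1) := Or.inr (Or.inl ⟨rfl, by norm_num⟩)
    have e₁₂ : IsEdge 3 T (1, 2) := Or.inr (Or.inl ⟨rfl, by norm_num⟩)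
    have e₀₂ : IsEdge 3 T (0, 2) := Or.inr (Or.inr ⟨rfl, rfl, by norm_num⟩)
    obtain ⟨a, b, c, d, hdet, h₀, h₁, h₂⟩ := exists_moebius_three (h.1 _ e₀₁) (h.1 _ e₁₂)
      (h.1 _ e₀₂) (h'.1 _ e₀₁) (h'.1 _ e₁₂) (h'.1 _ e₀₂)
    refine ⟨a, b, c, d, hdet, fun j hj => ?_⟩
    obtain rfl | rfl | rfl : j = 0 ∨ j = 1 ∨ j = 2 := by omega
    exacts [⟨h₀.1, h₀.2.symm⟩, ⟨h₁.1, h₁.2.symm⟩, ⟨h₂.1, h₂.2.symm⟩]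
  | succ m hm ih =>
    obtain ⟨i, hE⟩ := hT.exists_isEar (by omega)
    have := hE.lt
    have hcut := hT.cutEar hE
    obtain ⟨a, b, c, d, hdet, hM⟩ := ih hcut (fun q hq =>
      hX _ (mem_of_mem_erase (map_liftVert_mem_of_mem_cutEar hE.tip_free hq)))
      (h.comp_liftVert hE) (h'.comp_liftVert hE)
    obtain ⟨e, he⟩ := hcut.exists_isOuterApex_side hm (i := i) (by omega)
    have hq := hE.quad_of_isOuterApex he
    obtain ⟨hxy, hyz, -⟩ := h.ne_of_isOuterApex hq.2
    obtain ⟨hx, hx'⟩ := hM i (by omega)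
    obtain ⟨hy, hy'⟩ := hM (i + 1) (by omega)
    obtain ⟨hz, hz'⟩ := hM e (IsOuterApex.lt hcut.1 he)
    simp only [Function.comp_apply, liftVert_self, liftVert_succ_self] at hx hx' hy hy' hz hz'
    have hu := h.2 _ hE.mem _ _ hq
    have hu' := h'.2 _ hE.mem _ _ hq
    dsimp only at hu hu' hxy hyz
    rw [hx', hy', hz'] at hu'
    have htip := moebius_eq_of_crossRatio_eq (hX _ hE.mem) hdet hx hy hz hxy hyz hu hu'
    refine ⟨a, b, c, d, hdet, fun j hj => ?_⟩
    by_cases hj' : j = i + 1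
    · exact hj' ▸ htip
    · have := hM (dropVert i j) (by unfold dropVert; split_ifs <;> omega)
      simpa only [Function.comp_apply, liftVert_dropVert hj'] using this

/-- Given an ideal triangulation `T` of the `(n+3)`-gon and nonzero complex numbers `X_j`,
one for each diagonal `j` of `T`, there exists a configuration `ψ` of points of `ℂP¹`
(here normalized to lie in `ℂ`), generic with respect to `T` and unique up to the diagonal
Möbius (`PGL₂(ℂ)`) action, whose cross-ratio across each diagonal `j` of `T` equals `X_j`. -/
theorem stmt_9 (n : ℕ) (T : Finset (ℕ × ℕ)) (hT : IsTriangulation (n + 3) T)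
    (X : ℕ × ℕ → ℂ) (hX : ∀ p ∈ T, X p ≠ 0) :
    (∃ ψ : ℕ → ℂ,
      (∀ p : ℕ × ℕ, IsEdge (n + 3) T p → ψ p.1 ≠ ψ p.2) ∧
      ∀ p ∈ T, ∀ b d : ℕ, Quad (n + 3) T p b d →
        crossRatio (ψ p.1) (ψ b) (ψ p.2) (ψ d) = X p) ∧
    (∀ ψ ψ' : ℕ → ℂ,
      ((∀ p : ℕ × ℕ, IsEdge (n + 3) T p → ψ p.1 ≠ ψ p.2) ∧
        ∀ p ∈ T, ∀ b d : ℕ, Quad (n + 3) T p b d →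
          crossRatio (ψ p.1) (ψ b) (ψ p.2) (ψ d) = X p) →
      ((∀ p : ℕ × ℕ, IsEdge (n + 3) T p → ψ' p.1 ≠ ψ' p.2) ∧
        ∀ p ∈ T, ∀ b d : ℕ, Quad (n + 3) T p b d →
          crossRatio (ψ' p.1) (ψ' b) (ψ' p.2) (ψ' d) = X p) →
      ∃ a b c d : ℂ, a * d - b * c ≠ 0 ∧
        ∀ i < n + 3, c * ψ i + d ≠ 0 ∧ ψ' i = (a * ψ i + b) / (c * ψ i + d)) :=
  ⟨hT.exists_isRealization (by omega) hX,
    fun _ _ h h' => hT.isRealization_unique (by omega) hX h h'⟩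
end

section
/- If every triangle of an ideal triangulation T of the (n+3)-gon contains at least one boundary side, then the quiver Q(T) is an orientation of the Aₙ Dynkin diagram: its underlying graph is a path on n vertices. -/
/-- Adjacency in the underlying graph of the quiver `Q(T)`: two distinct diagonals are
adjacent iff some triangle of `T` contains both among its sides. -/
def QAdj (m : ℕ) (T : Finset (ℕ × ℕ)) (p q : ℕ × ℕ) : Prop :=
  p ≠ q ∧ ∃ a b c : ℕ, IsTri m T a b c ∧
    p ∈ ({(a, b), (b, c), (a, c)} : Set (ℕ × ℕ)) ∧
    q ∈ ({(a, b), (b, c), (a, c)} : Set (ℕ × ℕ))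

structure IsPathEnumeration {α : Type*} (R : α → α → Prop) (S : Finset α) {n : ℕ}
    (f : Fin n → α) : Prop where
  injective : Function.Injective f
  mem : ∀ i, f i ∈ S
  exists_eq : ∀ p ∈ S, ∃ i, f i = p
  rel_iff : ∀ i j, R (f i) (f j) ↔ (i : ℕ) + 1 = j ∨ (j : ℕ) + 1 = i

namespace IsPathEnumeration

variable {α β : Type*} {R : α → α → Prop} {S : Finset α} {n : ℕ} {f : Fin n → α}

lemma congr {R' : α → α → Prop} (hf : IsPathEnumeration R S f)
    (h : ∀ p ∈ S, ∀ q ∈ S, R p q ↔ R' p q) : IsPathEnumeration R' S f :=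
  ⟨hf.injective, hf.mem, hf.exists_eq,
    fun i j => (h _ (hf.mem i) _ (hf.mem j)).symm.trans (hf.rel_iff i j)⟩

lemma comp_rev (hf : IsPathEnumeration R S f) : IsPathEnumeration R S (f ∘ Fin.rev) := by
  refine ⟨hf.injective.comp Fin.rev_injective, fun i => hf.mem _, fun p hp => ?_, fun i j => ?_⟩
  · obtain ⟨i, rfl⟩ := hf.exists_eq p hp
    exact ⟨i.rev, by simp⟩
  · simp only [Function.comp_apply, hf.rel_iff, Fin.val_rev]
    omega

lemma exists_last_eq {q : α} (hf : IsPathEnumeration R S f) (hq : q ∈ S)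
    (huniq : ∀ r₁ ∈ S, ∀ r₂ ∈ S, R q r₁ → R q r₂ → r₁ = r₂) :
    ∃ g : Fin n → α, IsPathEnumeration R S g ∧ ∀ i, g i = q ↔ (i : ℕ) + 1 = n := by
  obtain ⟨k, rfl⟩ := hf.exists_eq q hq
  have hk := k.isLt
  by_cases hlast : (k : ℕ) + 1 = n
  · refine ⟨f, hf, fun i => hf.injective.eq_iff.trans ?_⟩
    rw [Fin.ext_iff]
    omega
  by_cases hfirst : (k : ℕ) = 0
  · refine ⟨f ∘ Fin.rev, hf.comp_rev, fun i => hf.injective.eq_iff.trans ?_⟩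
    rw [Fin.ext_iff, Fin.val_rev]
    omega
  exfalso
  have hprev := (hf.rel_iff k ⟨k - 1, by omega⟩).2 (Or.inr (by simp only; omega))
  have hnext := (hf.rel_iff k ⟨k + 1, by omega⟩).2 (Or.inl rfl)
  have := hf.injective (huniq _ (hf.mem _) _ (hf.mem _) hprev hnext)
  simp only [Fin.mk.injEq] at this
  omega

lemma snoc [DecidableEq α] [Std.Symm R] {x : α} (hf : IsPathEnumeration R S f) (hx : x ∉ S)
    (hxx : ¬R x x) (hxf : ∀ i, R x (f i) ↔ (i : ℕ) + 1 = n) :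
    IsPathEnumeration R (insert x S) (Fin.snoc (α := fun _ => α) f x) := by
  refine ⟨?_, ?_, ?_, ?_⟩
  · intro i j hij
    induction i using Fin.lastCases <;> induction j using Fin.lastCases <;>
      simp only [Fin.snoc_last, Fin.snoc_castSucc] at hij
    · rfl
    · exact absurd (hij ▸ hf.mem _) hx
    · exact absurd (hij ▸ hf.mem _) hx
    · rw [hf.injective hij]
  · intro i
    induction i using Fin.lastCases <;> simp [hf.mem]
  · intro p hp
    rcases Finset.mem_insert.1 hp with rfl | hp
    · exact ⟨Fin.last n, by simp⟩
    · obtain ⟨i, rfl⟩ := hf.exists_eq p hp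
      exact ⟨i.castSucc, by simp⟩
  · intro i j
    induction i using Fin.lastCases <;> induction j using Fin.lastCases <;>
      simp only [Fin.snoc_last, Fin.snoc_castSucc, Fin.val_last, Fin.val_castSucc]
    · simpa using hxx
    · rw [hxf]; omega
    · rw [Std.Symm.iff (r := R), hxf]; omega
    · exact hf.rel_iff _ _

lemma exists_of_image [DecidableEq β] {R' : β → β → Prop} {φ : α → β} (hφ : Set.InjOn φ S)
    (hR : ∀ p ∈ S, ∀ q ∈ S, R p q ↔ R' (φ p) (φ q)) {e : Fin n → β}
    (he : IsPathEnumeration R' (S.image φ) e) : ∃ f : Fin n → α, IsPathEnumeration R S f := by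
  choose f hfS hfφ using fun i => Finset.mem_image.1 (he.mem i)
  refine ⟨f, fun i j hij => he.injective (by rw [← hfφ, ← hfφ, hij]), hfS, fun p hp => ?_,
    fun i j => (hR _ (hfS i) _ (hfS j)).trans (by rw [hfφ, hfφ, he.rel_iff])⟩
  obtain ⟨i, hi⟩ := he.exists_eq (φ p) (Finset.mem_image_of_mem φ hp)
  exact ⟨i, hφ (hfS i) hp ((hfφ i).trans hi)⟩

end IsPathEnumeration

def IsNoncrossing (m : ℕ) (S : Finset (ℕ × ℕ)) : Prop :=
  (∀ p ∈ S, IsDiag m p) ∧ ∀ p ∈ S, ∀ q ∈ S, ¬Cross p q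

lemma IsTriangulation.isNoncrossing {m : ℕ} {T : Finset (ℕ × ℕ)} (hT : IsTriangulation m T) :
    IsNoncrossing m T :=
  ⟨hT.1, hT.2.1⟩

namespace IsNoncrossing

variable {m : ℕ} {S : Finset (ℕ × ℕ)}

/-- Contracting the vertices strictly inside a shortest diagonal `d` turns `d` into a side and
keeps every other diagonal: none of them has an endpoint strictly inside `d`. -/
lemma exists_contract (hS : IsNoncrossing m S) {d : ℕ × ℕ} (hd : d ∈ S)
    (hmin : ∀ q ∈ S, d.2 - d.1 ≤ q.2 - q.1) :
    ∃ S' : Finset (ℕ × ℕ), IsNoncrossing (m - (d.2 - d.1) + 1) S' ∧ S'.card + 1 = S.card := by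
  obtain ⟨a, b⟩ := d
  obtain ⟨hab, hbm, hne⟩ := hS.1 _ hd
  simp only at hab hbm hne hmin ⊢
  set ψ : ℕ → ℕ := fun x => if x ≤ a then x else x - (b - a - 1) with hψ
  have avoid : ∀ q ∈ S.erase (a, b), (q.1 ≤ a ∨ b ≤ q.1) ∧ (q.2 ≤ a ∨ b ≤ q.2) ∧
      (q.1 ≤ a → b ≤ q.2 → q.1 + (b - a) < q.2) := by
    intro q hq
    obtain ⟨hqd, hqS⟩ := Finset.mem_erase.1 hq
    have h₁ := hS.1 q hqS
    have h₂ := hS.2 _ hd q hqS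
    have h₃ := hS.2 q hqS _ hd
    have h₄ := hmin q hqS
    rw [Ne, Prod.ext_iff] at hqd
    unfold Cross IsDiag at *
    simp only at *
    omega
  have ψ_lt : ∀ x y, (x ≤ a ∨ b ≤ x) → (y ≤ a ∨ b ≤ y) → (ψ x < ψ y ↔ x < y) := by
    intro x y hx hy; simp only [hψ]; split_ifs <;> omega
  have ψ_eq : ∀ x y, (x ≤ a ∨ b ≤ x) → (y ≤ a ∨ b ≤ y) → (ψ x = ψ y ↔ x = y) := by
    intro x y hx hy; simp only [hψ]; split_ifs <;> omega
  refine ⟨(S.erase (a, b)).image (fun q => (ψ q.1, ψ q.2)), ⟨?_, ?_⟩, ?_⟩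
  · simp only [Finset.forall_mem_image]
    intro q hq
    obtain ⟨hv₁, hv₂, hv₃⟩ := avoid q hq
    obtain ⟨h₁, h₂, h₃⟩ := hS.1 q (Finset.mem_of_mem_erase hq)
    refine ⟨?_, ?_, ?_⟩ <;> simp only [hψ] <;> split_ifs <;> omega
  · simp only [Finset.forall_mem_image]
    intro p hp q hq
    have hnc := hS.2 p (Finset.mem_of_mem_erase hp) q (Finset.mem_of_mem_erase hq)
    obtain ⟨hp₁, hp₂, -⟩ := avoid p hp
    obtain ⟨hq₁, hq₂, -⟩ := avoid q hq
    unfold Cross at hnc ⊢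
    rwa [ψ_lt _ _ hp₁ hq₁, ψ_lt _ _ hq₁ hp₂, ψ_lt _ _ hp₂ hq₂, ψ_lt _ _ hq₁ hp₁,
      ψ_lt _ _ hp₁ hq₂, ψ_lt _ _ hq₂ hp₂]
  · rw [Finset.card_image_of_injOn, Finset.card_erase_add_one hd]
    intro p hp q hq hpq
    obtain ⟨hp₁, hp₂, -⟩ := avoid p hp
    obtain ⟨hq₁, hq₂, -⟩ := avoid q hq
    simp only [Prod.ext_iff] at hpq ⊢
    rwa [ψ_eq _ _ hp₁ hq₁, ψ_eq _ _ hp₂ hq₂] at hpq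

lemma card_le (hS : IsNoncrossing m S) : S.card ≤ m - 3 := by
  induction m using Nat.strong_induction_on generalizing S with
  | _ m ih =>
    rcases S.eq_empty_or_nonempty with rfl | hne
    · simp
    obtain ⟨d, hd, hmin⟩ := S.exists_min_image (fun p => p.2 - p.1) hne
    obtain ⟨h₁, h₂, h₃⟩ := hS.1 d hd
    obtain ⟨S', hS', hcard⟩ := hS.exists_contract hd hmin
    have := ih _ (by omega) hS'
    omega

lemma card_add_length_le (hS : IsNoncrossing m S) {d : ℕ × ℕ} (hd : d ∈ S)
    (hmin : ∀ q ∈ S, d.2 - d.1 ≤ q.2 - q.1) : S.card + (d.2 - d.1) + 1 ≤ m := by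
  obtain ⟨h₁, h₂, h₃⟩ := hS.1 d hd
  obtain ⟨S', hS', hcard⟩ := hS.exists_contract hd hmin
  have := hS'.card_le
  omega

end IsNoncrossing

lemma card_le_of_noncrossing_between {S : Finset (ℕ × ℕ)} (x y : ℕ)
    (hS : ∀ p ∈ S, x ≤ p.1 ∧ p.1 + 1 < p.2 ∧ p.2 ≤ y ∧ p ≠ (x, y))
    (hcross : ∀ p ∈ S, ∀ q ∈ S, ¬Cross p q) : S.card ≤ y - x - 2 := by
  have hinj : Set.InjOn (fun p : ℕ × ℕ => (p.1 - x, p.2 - x)) S := by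
    intro p hp q hq hpq
    have := hS p hp
    have := hS q hq
    simp only [Prod.ext_iff] at hpq ⊢
    omega
  have key : IsNoncrossing (y - x + 1) (S.image fun p => (p.1 - x, p.2 - x)) := by
    refine ⟨?_, ?_⟩ <;> simp only [Finset.forall_mem_image]
    · intro p hp
      obtain ⟨h₁, h₂, h₃, h₄⟩ := hS p hp
      rw [Ne, Prod.ext_iff] at h₄
      unfold IsDiag
      omega
    · intro p hp q hq
      have := hS p hp
      have := hS q hq
      have := hcross p hp q hq
      unfold Cross at *
      omega
  have := key.card_le
  rw [Finset.card_image_of_injOn hinj] at this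
  omega

def triSides (a b c : ℕ) : Set (ℕ × ℕ) := {(a, b), (b, c), (a, c)}

def NoInternalTri (m : ℕ) (T : Finset (ℕ × ℕ)) : Prop :=
  ∀ a b c : ℕ, IsTri m T a b c → ¬((a, b) ∈ T ∧ (b, c) ∈ T ∧ (a, c) ∈ T)

lemma triSides_subset_iff {a b c : ℕ} {T : Finset (ℕ × ℕ)} :
    triSides a b c ⊆ T ↔ (a, b) ∈ T ∧ (b, c) ∈ T ∧ (a, c) ∈ T := by
  simp [triSides, Set.insert_subset_iff]

lemma IsEdge.lt {m : ℕ} {T : Finset (ℕ × ℕ)} {e : ℕ × ℕ} (hT : ∀ p ∈ T, IsDiag m p)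
    (he : IsEdge m T e) : e.1 < e.2 ∧ e.2 < m := by
  rcases he with he | he
  · obtain ⟨h₁, h₂, -⟩ := hT e he
    omega
  · unfold IsSide at he
    omega

lemma NoInternalTri.exists_isSide {m a b c : ℕ} {T : Finset (ℕ × ℕ)} (hT : NoInternalTri m T)
    (h : IsTri m T a b c) : IsSide m (a, b) ∨ IsSide m (b, c) ∨ IsSide m (a, c) := by
  by_contra! hside
  obtain ⟨-, -, eab, ebc, eac⟩ := id h
  exact hT a b c h ⟨eab.resolve_right hside.1, ebc.resolve_right hside.2.1,
    eac.resolve_right hside.2.2⟩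

lemma IsNoncrossing.card_erase_erase_le_of_split {m x : ℕ} {S : Finset (ℕ × ℕ)}
    (hS : IsNoncrossing m S) (hsplit : ∀ p ∈ S, p.2 ≤ x ∨ x ≤ p.1) :
    ((S.erase (0, x)).erase (x, m - 1)).card ≤ (x - 2) + (m - 1 - x - 2) := by
  set S' := (S.erase (0, x)).erase (x, m - 1)
  have hS' : ∀ p ∈ S', p ≠ (0, x) ∧ p ≠ (x, m - 1) ∧ IsDiag m p ∧ (p.2 ≤ x ∨ x ≤ p.1) := by
    intro p hp
    obtain ⟨h₁, h₂, hpS⟩ := Finset.mem_erase.1 hp |>.imp_right Finset.mem_erase.1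
    exact ⟨h₂, h₁, hS.1 p hpS, hsplit p hpS⟩
  have hcross : ∀ p ∈ S', ∀ q ∈ S', ¬Cross p q := fun p hp q hq =>
    hS.2 p (Finset.mem_of_mem_erase (Finset.mem_of_mem_erase hp))
      q (Finset.mem_of_mem_erase (Finset.mem_of_mem_erase hq))
  have hlow : (S'.filter (·.2 ≤ x)).card ≤ x - 0 - 2 := by
    refine card_le_of_noncrossing_between 0 x (fun p hp => ?_)
      (fun p hp q hq => hcross p (Finset.mem_of_mem_filter p hp) q (Finset.mem_of_mem_filter q hq))
    obtain ⟨hpS, hpx⟩ := Finset.mem_filter.1 hp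
    obtain ⟨h₁, -, ⟨h₃, -, -⟩, -⟩ := hS' p hpS
    exact ⟨Nat.zero_le _, h₃, hpx, h₁⟩
  have hhigh : (S'.filter (¬·.2 ≤ x)).card ≤ m - 1 - x - 2 := by
    refine card_le_of_noncrossing_between x (m - 1) (fun p hp => ?_)
      (fun p hp q hq => hcross p (Finset.mem_of_mem_filter p hp) q (Finset.mem_of_mem_filter q hq))
    obtain ⟨hpS, hpx⟩ := Finset.mem_filter.1 hp
    obtain ⟨-, h₂, ⟨h₃, h₄, -⟩, h₅⟩ := hS' p hpS
    exact ⟨by omega, h₃, by omega, h₂⟩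
  have := Finset.card_filter_add_card_filter_not (s := S') (·.2 ≤ x)
  omega

lemma IsTriangulation.exists_ear {m : ℕ} {T : Finset (ℕ × ℕ)} (hT : IsTriangulation m T)
    (hm : 4 ≤ m) : ∃ a, (a, a + 2) ∈ T := by
  have hne : T.Nonempty := by rw [← Finset.card_pos, hT.2.2]; omega
  obtain ⟨d, hd, hmin⟩ := T.exists_min_image (fun p => p.2 - p.1) hne
  have := hT.isNoncrossing.card_add_length_le hd hmin
  obtain ⟨h₁, -, -⟩ := hT.1 d hd
  refine ⟨d.1, ?_⟩
  convert hd using 1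
  ext
  · rfl
  · rw [hT.2.2] at this
    omega

lemma IsTriangulation.exists_apex {m : ℕ} {T : Finset (ℕ × ℕ)} (hT : IsTriangulation m T)
    (hm : 3 ≤ m) : ∃ x, 0 < x ∧ x < m - 1 ∧ IsEdge m T (0, x) ∧ IsEdge m T (x, m - 1) := by
  classical
  -- the apex must be the farthest neighbour `x` of `0`: otherwise the diagonals on the two sides
  -- of `x` are too few
  set x := Nat.findGreatest (fun t => IsEdge m T (0, t)) (m - 2)
  have hedge₁ : IsEdge m T (0, 1) := Or.inr (Or.inl ⟨rfl, by omega⟩)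
  have hx₁ : 1 ≤ x := Nat.le_findGreatest (by omega) hedge₁
  have hxm : x ≤ m - 2 := Nat.findGreatest_le _
  have hedge₀ : IsEdge m T (0, x) :=
    Nat.findGreatest_spec (P := fun t => IsEdge m T (0, t)) (by omega) hedge₁
  by_contra hno
  have hxT : (x, m - 1) ∉ T := fun h => hno ⟨x, hx₁, by omega, hedge₀, Or.inl h⟩
  have hxm' : x ≠ m - 2 := fun h =>
    hno ⟨x, hx₁, by omega, hedge₀, Or.inr (Or.inl ⟨by simp only; omega, by simp only; omega⟩)⟩
  have hsplit : ∀ p ∈ T, p.2 ≤ x ∨ x ≤ p.1 := by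
    intro p hp
    obtain ⟨h₁, h₂, h₃⟩ := hT.1 p hp
    obtain ⟨a, b⟩ := p
    simp only at h₁ h₂ h₃ ⊢
    rcases Nat.eq_zero_or_pos a with rfl | ha
    · exact Or.inl (Nat.le_findGreatest (by omega) (Or.inl hp))
    rcases hedge₀ with hx | hx
    · have := hT.2.1 _ hx _ hp
      unfold Cross at this
      omega
    · unfold IsSide at hx
      omega
  have hbound := hT.isNoncrossing.card_erase_erase_le_of_split hsplit
  rw [Finset.erase_eq_of_notMem (fun h => hxT (Finset.mem_of_mem_erase h))] at hbound
  have hcard := hT.2.2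
  by_cases h₀ : (0, x) ∈ T
  · have := Finset.card_erase_add_one h₀
    have := (hT.1 _ h₀).1
    simp only at this
    omega
  · rw [Finset.erase_eq_of_notMem h₀] at hbound
    omega

/-- The rotation `x ↦ x + 1 (mod m)` of the vertices, acting on pairs written in increasing
order. -/
def rot (m : ℕ) (p : ℕ × ℕ) : ℕ × ℕ :=
  if p.2 = m - 1 then (0, p.1 + 1) else (p.1 + 1, p.2 + 1)

def rotate (m : ℕ) (T : Finset (ℕ × ℕ)) : Finset (ℕ × ℕ) := T.image (rot m)

section Rotation

variable {m : ℕ} {T : Finset (ℕ × ℕ)}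

lemma rot_of_eq {a b : ℕ} (h : b = m - 1) : rot m (a, b) = (0, a + 1) := if_pos h

lemma rot_of_ne {a b : ℕ} (h : b ≠ m - 1) : rot m (a, b) = (a + 1, b + 1) := if_neg h

lemma rot_injective : Function.Injective (rot m) := by
  intro p q h
  unfold rot at h
  split_ifs at h <;> simp only [Prod.ext_iff] at h ⊢ <;> omega

lemma isDiag_rot {p : ℕ × ℕ} (h : IsDiag m p) : IsDiag m (rot m p) := by
  obtain ⟨a, b⟩ := p
  unfold IsDiag at *
  by_cases hb : b = m - 1
  · rw [rot_of_eq hb]; simp only [true_and] at h ⊢; omega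
  · rw [rot_of_ne hb]; simp only at h ⊢; omega

lemma not_cross_rot {p q : ℕ × ℕ} (hp : IsDiag m p) (hq : IsDiag m q) (h : ¬Cross p q) :
    ¬Cross (rot m p) (rot m q) := by
  obtain ⟨a, b⟩ := p
  obtain ⟨c, d⟩ := q
  unfold IsDiag Cross at *
  by_cases hb : b = m - 1 <;> by_cases hd : d = m - 1 <;>
    simp only [rot_of_eq, rot_of_ne, hb, hd, ne_eq, not_false_eq_true] at hp hq h ⊢ <;> omega

lemma isSide_rot_iff {p : ℕ × ℕ} (hp : p.1 < p.2 ∧ p.2 < m) :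
    IsSide m (rot m p) ↔ IsSide m p := by
  obtain ⟨a, b⟩ := p
  unfold IsSide
  by_cases hb : b = m - 1
  · rw [rot_of_eq hb]; simp only [true_and] at hp ⊢; omega
  · rw [rot_of_ne hb]; simp only at hp ⊢; omega

lemma rot_mem_rotate_iff {p : ℕ × ℕ} : rot m p ∈ rotate m T ↔ p ∈ T :=
  rot_injective.mem_finset_image

lemma isEdge_rotate_iff {p : ℕ × ℕ} (hp : p.1 < p.2 ∧ p.2 < m) :
    IsEdge m (rotate m T) (rot m p) ↔ IsEdge m T p := by
  rw [IsEdge, IsEdge, rot_mem_rotate_iff, isSide_rot_iff hp]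

lemma forall_isDiag_rotate (hT : ∀ p ∈ T, IsDiag m p) : ∀ p ∈ rotate m T, IsDiag m p := by
  simpa only [rotate, Finset.forall_mem_image] using fun p hp => isDiag_rot (hT p hp)

lemma isTriangulation_rotate (hT : IsTriangulation m T) : IsTriangulation m (rotate m T) := by
  obtain ⟨hdiag, hcross, hcard⟩ := hT
  refine ⟨forall_isDiag_rotate hdiag, ?_, ?_⟩
  · simp only [rotate, Finset.forall_mem_image]
    exact fun p hp q hq => not_cross_rot (hdiag p hp) (hdiag q hq) (hcross p hp q hq)
  · rw [rotate, Finset.card_image_of_injective _ rot_injective, hcard]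

lemma rot_image_triSides_of_eq {a b c : ℕ} (hbc : b < c) (hc : c = m - 1) :
    rot m '' triSides a b c = triSides 0 (a + 1) (b + 1) := by
  simp only [triSides, Set.image_insert_eq, Set.image_singleton, rot_of_eq hc,
    rot_of_ne (show b ≠ m - 1 by omega)]
  ext
  simp only [Set.mem_insert_iff, Set.mem_singleton_iff]
  tauto

lemma rot_image_triSides_of_ne {a b c : ℕ} (hbc : b < c) (hcm : c < m) (hc : c ≠ m - 1) :
    rot m '' triSides a b c = triSides (a + 1) (b + 1) (c + 1) := by
  simp only [triSides, Set.image_insert_eq, Set.image_singleton, rot_of_ne hc,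
    rot_of_ne (show b ≠ m - 1 by omega)]

lemma IsEdge.rotate (hT : ∀ p ∈ T, IsDiag m p) {e : ℕ × ℕ} (he : IsEdge m T e) :
    IsEdge m (rotate m T) (rot m e) :=
  (isEdge_rotate_iff (he.lt hT)).2 he

lemma IsTri.exists_rotate (hT : ∀ p ∈ T, IsDiag m p) {a b c : ℕ} (h : IsTri m T a b c) :
    ∃ a' b' c', IsTri m (rotate m T) a' b' c' ∧ rot m '' triSides a b c = triSides a' b' c' := by
  obtain ⟨hab, hbc, eab, ebc, eac⟩ := h
  have hcm := (ebc.lt hT).2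
  by_cases hc : c = m - 1
  · refine ⟨0, a + 1, b + 1, ⟨by omega, by omega, ?_, ?_, ?_⟩, rot_image_triSides_of_eq hbc hc⟩
    · exact rot_of_eq hc ▸ eac.rotate hT
    · exact rot_of_ne (show b ≠ m - 1 by omega) ▸ eab.rotate hT
    · exact rot_of_eq hc ▸ ebc.rotate hT
  · refine ⟨a + 1, b + 1, c + 1, ⟨by omega, by omega, ?_, ?_, ?_⟩,
      rot_image_triSides_of_ne hbc hcm hc⟩
    · exact rot_of_ne (show b ≠ m - 1 by omega) ▸ eab.rotate hT
    · exact rot_of_ne hc ▸ ebc.rotate hT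
    · exact rot_of_ne hc ▸ eac.rotate hT

lemma IsTri.exists_of_rotate (hT : ∀ p ∈ T, IsDiag m p) {a b c : ℕ}
    (h : IsTri m (rotate m T) a b c) :
    ∃ a' b' c', IsTri m T a' b' c' ∧ rot m '' triSides a' b' c' = triSides a b c := by
  obtain ⟨hab, hbc, eab, ebc, eac⟩ := h
  have hcm := (ebc.lt (forall_isDiag_rotate hT)).2
  obtain ⟨b, rfl⟩ : ∃ b', b = b' + 1 := ⟨b - 1, by omega⟩
  obtain ⟨c, rfl⟩ : ∃ c', c = c' + 1 := ⟨c - 1, by omega⟩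
  have hc : c ≠ m - 1 := by omega
  rcases Nat.eq_zero_or_pos a with rfl | ha
  · refine ⟨b, c, m - 1, ⟨by omega, by omega, ?_, ?_, ?_⟩, rot_image_triSides_of_eq (by omega) rfl⟩
    · exact (isEdge_rotate_iff ⟨by omega, by omega⟩).1 (rot_of_ne hc ▸ ebc)
    · exact (isEdge_rotate_iff ⟨by omega, by omega⟩).1 ((rot_of_eq rfl).symm ▸ eac)
    · exact (isEdge_rotate_iff ⟨by omega, by omega⟩).1 ((rot_of_eq rfl).symm ▸ eab)
  · obtain ⟨a, rfl⟩ : ∃ a', a = a' + 1 := ⟨a - 1, by omega⟩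
    refine ⟨a, b, c, ⟨by omega, by omega, ?_, ?_, ?_⟩,
      rot_image_triSides_of_ne (by omega) (by omega) hc⟩
    · exact (isEdge_rotate_iff ⟨by omega, by omega⟩).1 (rot_of_ne (show b ≠ m - 1 by omega) ▸ eab)
    · exact (isEdge_rotate_iff ⟨by omega, by omega⟩).1 (rot_of_ne hc ▸ ebc)
    · exact (isEdge_rotate_iff ⟨by omega, by omega⟩).1 (rot_of_ne hc ▸ eac)

lemma qAdj_rotate_iff (hT : ∀ p ∈ T, IsDiag m p) {p q : ℕ × ℕ} :
    QAdj m (rotate m T) (rot m p) (rot m q) ↔ QAdj m T p q := by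
  constructor
  · rintro ⟨hne, a, b, c, htri, hp, hq⟩
    obtain ⟨a', b', c', htri', hsides⟩ := htri.exists_of_rotate hT
    change rot m p ∈ triSides a b c at hp
    change rot m q ∈ triSides a b c at hq
    rw [← hsides, rot_injective.mem_set_image] at hp hq
    exact ⟨fun h => hne (congrArg (rot m) h), a', b', c', htri', hp, hq⟩
  · rintro ⟨hne, a, b, c, htri, hp, hq⟩
    obtain ⟨a', b', c', htri', hsides⟩ := htri.exists_rotate hT
    refine ⟨rot_injective.ne hne, a', b', c', htri', ?_, ?_⟩ <;>
      rw [← triSides, ← hsides, rot_injective.mem_set_image] <;> assumption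

lemma noInternalTri_rotate (hT : ∀ p ∈ T, IsDiag m p) (h : NoInternalTri m T) :
    NoInternalTri m (rotate m T) := by
  intro a b c htri hsub
  obtain ⟨a', b', c', htri', hsides⟩ := htri.exists_of_rotate hT
  refine h a' b' c' htri' (triSides_subset_iff.1 fun s hs => ?_)
  have : rot m s ∈ triSides a b c := hsides ▸ Set.mem_image_of_mem _ hs
  exact rot_mem_rotate_iff.1 (triSides_subset_iff.2 hsub this)

end Rotation

lemma exists_iterate_rotate_mem {m a : ℕ} {T : Finset (ℕ × ℕ)} (ha : (a, a + 2) ∈ T)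
    (ham : a + 2 < m) : ∃ k, (0, m - 2) ∈ (rotate m)^[k] T := by
  induction h : m - 3 - a generalizing a T with
  | zero =>
    refine ⟨1, ?_⟩
    have hrot : rot m (a, a + 2) = (0, m - 2) := by rw [rot_of_eq (by omega)]; congr 1; omega
    exact hrot ▸ Finset.mem_image_of_mem _ ha
  | succ d ih =>
    have ha' : (a + 1, a + 1 + 2) ∈ rotate m T := by
      have := Finset.mem_image_of_mem (rot m) ha
      rwa [rot_of_ne (by omega)] at this
    obtain ⟨k, hk⟩ := ih ha' (by omega) (by omega)
    exact ⟨k + 1, by rwa [Function.iterate_succ_apply]⟩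

instance {m : ℕ} {T : Finset (ℕ × ℕ)} : Std.Symm (QAdj m T) :=
  ⟨fun _ _ ⟨hne, a, b, c, htri, hp, hq⟩ => ⟨hne.symm, a, b, c, htri, hq, hp⟩⟩

lemma eq_of_qAdj_of_le {m : ℕ} {T : Finset (ℕ × ℕ)} (hdiag : ∀ p ∈ T, IsDiag m p)
    (hT : NoInternalTri m T) {p q : ℕ × ℕ} (hp : p ∈ T) (hq : q ∈ T) (hpq : QAdj m T p q)
    (h₁ : p.1 ≤ q.1) (h₂ : q.2 ≤ p.2) : q = (p.1 + 1, p.2) ∨ q = (p.1, p.2 - 1) := by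
  obtain ⟨hne, a, b, c, htri, hps, hqs⟩ := hpq
  have hside := hT.exists_isSide htri
  have hpd := hdiag p hp
  have hqd := hdiag q hq
  obtain ⟨hab, hbc, -⟩ := htri
  simp only [Set.mem_insert_iff, Set.mem_singleton_iff, Prod.ext_iff] at hps hqs ⊢
  rw [Ne, Prod.ext_iff] at hne
  unfold IsSide at hside
  unfold IsDiag at hpd hqd
  omega

/-- The only candidates `(p.1 + 1, p.2)` and `(p.1, p.2 - 1)` cross each other. -/
lemma eq_of_qAdj_of_qAdj_of_le {m : ℕ} {T : Finset (ℕ × ℕ)} (hT : IsNoncrossing m T)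
    (hnoint : NoInternalTri m T) {p q r : ℕ × ℕ} (hp : p ∈ T) (hq : q ∈ T) (hr : r ∈ T)
    (hpq : QAdj m T p q) (hpr : QAdj m T p r) (hq₁ : p.1 ≤ q.1) (hq₂ : q.2 ≤ p.2)
    (hr₁ : p.1 ≤ r.1) (hr₂ : r.2 ≤ p.2) : q = r := by
  have hq' := eq_of_qAdj_of_le hT.1 hnoint hp hq hpq hq₁ hq₂
  have hr' := eq_of_qAdj_of_le hT.1 hnoint hp hr hpr hr₁ hr₂
  have hqr := hT.2 q hq r hr
  have hrq := hT.2 r hr q hq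
  have hqd := hT.1 q hq
  unfold Cross at hqr hrq
  unfold IsDiag at hqd
  rcases hq' with rfl | rfl <;> rcases hr' with rfl | rfl <;> simp only at hqr hrq hqd ⊢ <;> omega

lemma le_of_not_cross_of_isDiag {n : ℕ} {q r : ℕ × ℕ} (hq : q = (1, n + 2) ∨ q = (0, n + 1))
    (hr : IsDiag (n + 3) r) (hqr : ¬Cross q r) (hrq : ¬Cross r q) : q.1 ≤ r.1 ∧ r.2 ≤ q.2 := by
  unfold Cross at hqr hrq
  unfold IsDiag at hr
  rcases hq with rfl | rfl <;> simp only at hqr hrq hr ⊢ <;> omega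

lemma eq_of_qAdj_ear {n : ℕ} {T : Finset (ℕ × ℕ)} (hT : IsNoncrossing (n + 3) T)
    (hnoint : NoInternalTri (n + 3) T) {q r₁ r₂ : ℕ × ℕ} (hq : q = (1, n + 2) ∨ q = (0, n + 1))
    (hqT : q ∈ T) (hr₁ : r₁ ∈ T) (hr₂ : r₂ ∈ T) (h₁ : QAdj (n + 3) T q r₁)
    (h₂ : QAdj (n + 3) T q r₂) : r₁ = r₂ := by
  have hinside : ∀ r ∈ T, q.1 ≤ r.1 ∧ r.2 ≤ q.2 := fun r hr =>
    le_of_not_cross_of_isDiag hq (hT.1 r hr) (hT.2 _ hqT r hr) (hT.2 r hr _ hqT)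
  exact eq_of_qAdj_of_qAdj_of_le hT hnoint hqT hr₁ hr₂ h₁ h₂ (hinside r₁ hr₁).1
    (hinside r₁ hr₁).2 (hinside r₂ hr₂).1 (hinside r₂ hr₂).2

section Ear

variable {n : ℕ} {T : Finset (ℕ × ℕ)}

lemma IsNoncrossing.snd_le_of_ear (hT : IsNoncrossing (n + 4) T) (he : (0, n + 2) ∈ T)
    {p : ℕ × ℕ} (hp : p ∈ T) : p.2 ≤ n + 2 := by
  have hcross := hT.2 _ he p hp
  obtain ⟨h₁, h₂, h₃⟩ := hT.1 p hp
  unfold Cross at hcross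
  simp only at hcross h₃
  omega

lemma IsTriangulation.erase_ear (hT : IsTriangulation (n + 4) T) (he : (0, n + 2) ∈ T) :
    IsTriangulation (n + 3) (T.erase (0, n + 2)) := by
  refine ⟨fun p hp => ?_, fun p hp q hq => hT.2.1 p (Finset.mem_of_mem_erase hp) q
    (Finset.mem_of_mem_erase hq), by rw [Finset.card_erase_of_mem he, hT.2.2]; rfl⟩
  obtain ⟨hne, hpT⟩ := Finset.mem_erase.1 hp
  have := hT.isNoncrossing.snd_le_of_ear he hpT
  obtain ⟨h₁, -, -⟩ := hT.1 p hpT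
  rw [Ne, Prod.ext_iff] at hne
  exact ⟨h₁, by omega, by simpa using hne⟩

lemma IsEdge.of_erase_ear (he : (0, n + 2) ∈ T) {s : ℕ × ℕ}
    (hs : IsEdge (n + 3) (T.erase (0, n + 2)) s) : IsEdge (n + 4) T s := by
  rcases hs with hs | hs | ⟨h₁, h₂, -⟩
  · exact Or.inl (Finset.mem_of_mem_erase hs)
  · exact Or.inr (Or.inl ⟨hs.1, by omega⟩)
  · obtain ⟨a, b⟩ := s
    simp only at h₁ h₂
    subst h₁
    exact Or.inl (by simpa [h₂] using he)

lemma IsTri.of_erase_ear (he : (0, n + 2) ∈ T) {a b c : ℕ}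
    (h : IsTri (n + 3) (T.erase (0, n + 2)) a b c) : IsTri (n + 4) T a b c :=
  ⟨h.1, h.2.1, h.2.2.1.of_erase_ear he, h.2.2.2.1.of_erase_ear he, h.2.2.2.2.of_erase_ear he⟩

lemma NoInternalTri.erase_ear (he : (0, n + 2) ∈ T) (hnoint : NoInternalTri (n + 4) T) :
    NoInternalTri (n + 3) (T.erase (0, n + 2)) := fun a b c htri hsub =>
  hnoint a b c (htri.of_erase_ear he)
    ⟨Finset.mem_of_mem_erase hsub.1, Finset.mem_of_mem_erase hsub.2.1,
      Finset.mem_of_mem_erase hsub.2.2⟩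

lemma IsEdge.erase_ear {s : ℕ × ℕ} (hs : IsEdge (n + 4) T s) (hs₂ : s.2 ≤ n + 2) :
    IsEdge (n + 3) (T.erase (0, n + 2)) s := by
  by_cases hse : s = (0, n + 2)
  · exact Or.inr (Or.inr ⟨by rw [hse], by rw [hse]; rfl, by omega⟩)
  rcases hs with hs | ⟨h₁, -⟩ | ⟨-, h₂, -⟩
  · exact Or.inl (Finset.mem_erase.2 ⟨hse, hs⟩)
  · exact Or.inr (Or.inl ⟨h₁, by omega⟩)
  · omega

lemma IsNoncrossing.eq_of_isEdge_last (hT : IsNoncrossing (n + 4) T) (he : (0, n + 2) ∈ T)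
    {x : ℕ} (hx : IsEdge (n + 4) T (x, n + 3)) : x = 0 ∨ x = n + 2 := by
  rcases hx with hx | hx
  · have := hT.snd_le_of_ear he hx
    simp only at this
    omega
  · unfold IsSide at hx
    simp only at hx
    omega

/-- The ear `(0, n + 2)` cuts off the triangle `(0, n + 2, n + 3)`, which contains no other
diagonal, so removing the vertex `n + 3` does not change adjacency among the other diagonals. -/
lemma qAdj_erase_ear_iff (hT : IsTriangulation (n + 4) T) (he : (0, n + 2) ∈ T) {p q : ℕ × ℕ}
    (hp : p ∈ T.erase (0, n + 2)) :
    QAdj (n + 3) (T.erase (0, n + 2)) p q ↔ QAdj (n + 4) T p q := by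
  refine ⟨fun ⟨hne, a, b, c, htri, hps, hqs⟩ => ⟨hne, a, b, c, htri.of_erase_ear he, hps, hqs⟩, ?_⟩
  rintro ⟨hne, a, b, c, ⟨hab, hbc, eab, ebc, eac⟩, hps, hqs⟩
  have hcm := (ebc.lt hT.1).2
  by_cases hc : c ≤ n + 2
  · exact ⟨hne, a, b, c, ⟨hab, hbc, eab.erase_ear (by simp only; omega),
      ebc.erase_ear hc, eac.erase_ear hc⟩, hps, hqs⟩
  obtain rfl : c = n + 3 := by omega
  have ha := hT.isNoncrossing.eq_of_isEdge_last he eac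
  have hb := hT.isNoncrossing.eq_of_isEdge_last he ebc
  obtain ⟨hpe, hpT⟩ := Finset.mem_erase.1 hp
  have hp₂ := hT.isNoncrossing.snd_le_of_ear he hpT
  simp only [Set.mem_insert_iff, Set.mem_singleton_iff] at hps
  rw [Ne, Prod.ext_iff] at hpe
  rcases hps with rfl | rfl | rfl <;> simp only at hpe hp₂ <;> omega

lemma exists_qAdj_ear (hT : IsTriangulation (n + 4) T) (hnoint : NoInternalTri (n + 4) T)
    (he : (0, n + 2) ∈ T) (hn : 0 < n) :
    ∃ q ∈ T.erase (0, n + 2), QAdj (n + 4) T (0, n + 2) q ∧ (q = (1, n + 2) ∨ q = (0, n + 1)) := by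
  obtain ⟨x, hx₀, hx, h0x, hxe⟩ := (hT.erase_ear he).exists_apex (by omega)
  have e0x : IsEdge (n + 4) T (0, x) := h0x.of_erase_ear he
  have exe : IsEdge (n + 4) T (x, n + 2) := hxe.of_erase_ear he
  have htri : IsTri (n + 4) T 0 x (n + 2) := ⟨hx₀, by omega, e0x, exe, Or.inl he⟩
  have hside := hnoint.exists_isSide htri
  unfold IsSide at hside
  simp only at hside
  rcases hside with h | h | h
  · obtain rfl : x = 1 := by omega
    have hq : (1, n + 2) ∈ T := exe.resolve_right (by unfold IsSide; omega)
    exact ⟨_, Finset.mem_erase.2 ⟨by simp, hq⟩, ⟨by simp, 0, 1, n + 2, htri, by simp, by simp⟩,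
      Or.inl rfl⟩
  · obtain rfl : x = n + 1 := by omega
    have hq : (0, n + 1) ∈ T := e0x.resolve_right (by unfold IsSide; omega)
    exact ⟨_, Finset.mem_erase.2 ⟨by simp, hq⟩, ⟨by simp, 0, n + 1, n + 2, htri, by simp, by simp⟩,
      Or.inr rfl⟩
  · omega

lemma exists_pathEnumeration_of_ear (hT : IsTriangulation (n + 4) T)
    (hnoint : NoInternalTri (n + 4) T) (he : (0, n + 2) ∈ T) {f : Fin n → ℕ × ℕ}
    (hf : IsPathEnumeration (QAdj (n + 3) (T.erase (0, n + 2))) (T.erase (0, n + 2)) f) :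
    ∃ g : Fin (n + 1) → ℕ × ℕ, IsPathEnumeration (QAdj (n + 4) T) T g := by
  have hcongr : ∀ p ∈ T.erase (0, n + 2), ∀ q ∈ T.erase (0, n + 2),
      QAdj (n + 3) (T.erase (0, n + 2)) p q ↔ QAdj (n + 4) T p q :=
    fun p hp _ _ => qAdj_erase_ear_iff hT he hp
  obtain ⟨f', hf', hlast⟩ : ∃ f' : Fin n → ℕ × ℕ,
      IsPathEnumeration (QAdj (n + 4) T) (T.erase (0, n + 2)) f' ∧
        ∀ i, QAdj (n + 4) T (0, n + 2) (f' i) ↔ (i : ℕ) + 1 = n := by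
    rcases Nat.eq_zero_or_pos n with rfl | hn
    · exact ⟨f, hf.congr hcongr, fun i => i.elim0⟩
    obtain ⟨q₀, hq₀, hadj, hq₀'⟩ := exists_qAdj_ear hT hnoint he hn
    obtain ⟨g, hg, hgq⟩ := hf.exists_last_eq hq₀ fun r₁ hr₁ r₂ hr₂ =>
      eq_of_qAdj_ear (hT.erase_ear he).isNoncrossing (hnoint.erase_ear he) hq₀' hq₀ hr₁ hr₂
    have hear : ∀ q ∈ T.erase (0, n + 2), QAdj (n + 4) T (0, n + 2) q ↔ q = q₀ :=
      fun q hq => ⟨fun h => eq_of_qAdj_ear (n := n + 1) hT.isNoncrossing hnoint (Or.inr rfl) he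
        (Finset.mem_of_mem_erase hq) (Finset.mem_of_mem_erase hq₀) h hadj, fun h => h ▸ hadj⟩
    exact ⟨g, hg.congr hcongr, fun i => (hear _ (hg.mem i)).trans (hgq i)⟩
  have hg := hf'.snoc (Finset.notMem_erase _ _) (fun h => h.1 rfl) hlast
  rw [Finset.insert_erase he] at hg
  exact ⟨_, hg⟩

end Ear

lemma isTriangulation_iterate_rotate {m : ℕ} {T : Finset (ℕ × ℕ)} (hT : IsTriangulation m T)
    (hnoint : NoInternalTri m T) (k : ℕ) :
    IsTriangulation m ((rotate m)^[k] T) ∧ NoInternalTri m ((rotate m)^[k] T) :=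
  Function.Iterate.rec (fun S => IsTriangulation m S ∧ NoInternalTri m S) ⟨hT, hnoint⟩
    (fun _ h => ⟨isTriangulation_rotate h.1, noInternalTri_rotate h.1.1 h.2⟩) k

lemma exists_pathEnumeration_of_iterate_rotate {m n k : ℕ} {T : Finset (ℕ × ℕ)}
    (hT : IsTriangulation m T) {f : Fin n → ℕ × ℕ}
    (hf : IsPathEnumeration (QAdj m ((rotate m)^[k] T)) ((rotate m)^[k] T) f) :
    ∃ g : Fin n → ℕ × ℕ, IsPathEnumeration (QAdj m T) T g := by
  induction k generalizing T f with
  | zero => exact ⟨f, hf⟩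
  | succ k ih =>
    rw [Function.iterate_succ_apply] at hf
    obtain ⟨g, hg⟩ := ih (isTriangulation_rotate hT) hf
    exact hg.exists_of_image rot_injective.injOn fun p _ q _ => (qAdj_rotate_iff hT.1).symm

lemma exists_pathEnumeration : ∀ (n : ℕ) (T : Finset (ℕ × ℕ)), IsTriangulation (n + 3) T →
    NoInternalTri (n + 3) T → ∃ f : Fin n → ℕ × ℕ, IsPathEnumeration (QAdj (n + 3) T) T f
  | 0, T, hT, _ => by
    have hT₀ : T = ∅ := Finset.card_eq_zero.1 hT.2.2
    subst hT₀
    exact ⟨Fin.elim0, ⟨fun i => i.elim0, fun i => i.elim0, by simp, fun i => i.elim0⟩⟩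
  | n + 1, T, hT, hnoint => by
    obtain ⟨a, ha⟩ := hT.exists_ear (by omega)
    obtain ⟨k, hk⟩ := exists_iterate_rotate_mem ha (hT.1 _ ha).2.1
    obtain ⟨hTk, hnointk⟩ := isTriangulation_iterate_rotate hT hnoint k
    obtain ⟨f, hf⟩ := exists_pathEnumeration n _ (hTk.erase_ear hk) (hnointk.erase_ear hk)
    obtain ⟨g, hg⟩ := exists_pathEnumeration_of_ear hTk hnointk hk hf
    exact exists_pathEnumeration_of_iterate_rotate hT hg

/-- If every triangle of an ideal triangulation `T` of the `(n+3)`-gon has at least one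
boundary side (i.e. `T` has no internal triangle), then the underlying graph of the quiver
`Q(T)` is a path on `n` vertices, i.e. of Dynkin type `Aₙ`. -/
theorem stmt_17 (n : ℕ) (T : Finset (ℕ × ℕ)) (hT : IsTriangulation (n + 3) T)
    (hnoint : ∀ a b c : ℕ, IsTri (n + 3) T a b c →
      ¬((a, b) ∈ T ∧ (b, c) ∈ T ∧ (a, c) ∈ T)) :
    ∃ f : Fin n → ℕ × ℕ, Function.Injective f ∧ (∀ i, f i ∈ T) ∧
      (∀ p ∈ T, ∃ i, f i = p) ∧
      ∀ i j : Fin n, QAdj (n + 3) T (f i) (f j) ↔ ((i : ℕ) + 1 = j ∨ (j : ℕ) + 1 = i) := by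
  obtain ⟨f, hf⟩ := exists_pathEnumeration n T hT hnoint
  exact ⟨f, hf.injective, hf.mem, hf.exists_eq, hf.rel_iff⟩
end
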